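/- arXiv:math/0307236 — 5 statements merged into one kernel-verified Lean document; each statement's English description precedes it below -/
import Mathlib

section
/- Let K be a field, B ⊆ ℤ_+^n the set of bases of a discrete polymatroid, and u_1, …, u_d ∈ B. Then there exist v_1, …, v_d ∈ B with v_1 + ⋯ + v_d = u_1 + ⋯ + u_d and |v_j(i) − v_k(i)| ≤ 1 for all i ∈ [n] and all 1 ≤ j, k ≤ d, such that the binomial x_{u_1}⋯x_{u_d} − x_{v_1}⋯x_{v_d} lies in the ideal of the polynomial ring K[x_u : u ∈ B] generated by the symmetric exchange relations. -/
open Finset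


/-- A discrete polymatroid on the ground set `[n]`. -/
def IsDiscretePolymatroid {n : ℕ} (P : Set (Fin n → ℕ)) : Prop :=
  P.Nonempty ∧ P.Finite ∧
    (∀ u ∈ P, ∀ v : Fin n → ℕ, v ≤ u → v ∈ P) ∧
    (∀ u ∈ P, ∀ v ∈ P, ∑ i, u i < ∑ i, v i → ∃ w ∈ P, u < w ∧ w ≤ u ⊔ v)

/-- A base of `P` is a maximal element of `P`. -/
def IsBaseOf {n : ℕ} (P : Set (Fin n → ℕ)) (u : Fin n → ℕ) : Prop :=
  u ∈ P ∧ ∀ v ∈ P, u ≤ v → v = u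

/-- The symmetric exchange relations in the polynomial ring `K[x_u : u ∈ B]`:
the binomials `x_u x_v − x_{u−ε_i+ε_j} x_{v−ε_j+ε_i}` where `u, v ∈ B`,
`u(i) > v(i)`, `u(j) < v(j)`, and both `u − ε_i + ε_j` and `v − ε_j + ε_i`
belong to `B`. -/
def symExchRels (K : Type*) [Field K] {n : ℕ} (B : Set (Fin n → ℕ)) :
    Set (MvPolynomial B K) :=
  {f | ∃ (u v u' v' : B) (i j : Fin n),
    (v : Fin n → ℕ) i < (u : Fin n → ℕ) i ∧
    (u : Fin n → ℕ) j < (v : Fin n → ℕ) j ∧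
    (u' : Fin n → ℕ) = (u : Fin n → ℕ) - Pi.single i 1 + Pi.single j 1 ∧
    (v' : Fin n → ℕ) = (v : Fin n → ℕ) - Pi.single j 1 + Pi.single i 1 ∧
    f = MvPolynomial.X u * MvPolynomial.X v -
      MvPolynomial.X u' * MvPolynomial.X v'}

namespace DPM

variable {n : ℕ} {P : Set (Fin n → ℕ)}

lemma down (hP : IsDiscretePolymatroid P) {u v : Fin n → ℕ} (hu : u ∈ P) (hv : v ≤ u) :
    v ∈ P := hP.2.2.1 u hu v hv

lemma exch (hP : IsDiscretePolymatroid P) {u v : Fin n → ℕ} (hu : u ∈ P) (hv : v ∈ P)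
    (h : ∑ i, u i < ∑ i, v i) : ∃ w ∈ P, u < w ∧ w ≤ u ⊔ v := hP.2.2.2 u hu v hv h

lemma zero_mem (hP : IsDiscretePolymatroid P) : (0 : Fin n → ℕ) ∈ P := by
  obtain ⟨u, hu⟩ := hP.1
  exact down hP hu (fun _ => Nat.zero_le _)

lemma exists_max (hP : IsDiscretePolymatroid P) (f : (Fin n → ℕ) → ℕ) :
    ∃ z ∈ P, ∀ t ∈ P, f t ≤ f z := by
  obtain ⟨z, hz, hmax⟩ := Set.Finite.exists_maximalFor f P hP.2.1 hP.1
  refine ⟨z, hz, fun t ht => ?_⟩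
  rcases le_total (f t) (f z) with h | h
  · exact h
  · exact hmax ht h

lemma eq_of_le_of_sum_le {f g : Fin n → ℕ} (hle : f ≤ g) (hs : ∑ i, g i ≤ ∑ i, f i) :
    f = g := by
  funext a
  by_contra hne
  have : ∑ i, f i < ∑ i, g i :=
    Finset.sum_lt_sum (fun i _ => hle i) ⟨a, Finset.mem_univ a, lt_of_le_of_ne (hle a) hne⟩
  omega

lemma exists_lt_coord {f g : Fin n → ℕ} (h : f < g) : ∃ a, f a < g a := by
  obtain ⟨hle, hne⟩ := lt_iff_le_and_ne.mp h
  obtain ⟨a, ha⟩ := Function.ne_iff.mp hne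
  exact ⟨a, lt_of_le_of_ne (hle a) ha⟩

lemma sum_lt_of_lt {f g : Fin n → ℕ} (h : f < g) : ∑ i, f i < ∑ i, g i := by
  obtain ⟨a, ha⟩ := exists_lt_coord h
  exact Finset.sum_lt_sum (fun i _ => h.le i) ⟨a, Finset.mem_univ a, ha⟩

lemma sum_single (i : Fin n) (A : Finset (Fin n)) :
    ∑ a ∈ A, Pi.single i (1 : ℕ) a = if i ∈ A then 1 else 0 := by
  simp [Pi.single_apply]

lemma sum_add_single (y : Fin n → ℕ) (m : Fin n) :
    ∑ i, (y + Pi.single m 1 : Fin n → ℕ) i = (∑ i, y i) + 1 := by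
  have : ∀ i, (y + Pi.single m 1 : Fin n → ℕ) i = y i + (Pi.single m 1 : Fin n → ℕ) i := fun i => rfl
  simp only [this, Finset.sum_add_distrib, sum_single, Finset.mem_univ, if_true]


lemma le_app {f g : Fin n → ℕ} (h : f ≤ g) (p : Fin n) : f p ≤ g p := h p

lemma augment (hP : IsDiscretePolymatroid P) (t : ℕ) :
    ∀ (y c : Fin n → ℕ) (m : Fin n), y ∈ P → c ∈ P →
    c ≤ y + Pi.single m 1 → c m = y m + 1 →
    (∀ l, c l < y l → y + Pi.single l 1 ∈ P) →
    (∑ i, y i) + 1 - (∑ i, c i) = t →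
    y + Pi.single m 1 ∈ P := by
  induction t using Nat.strong_induction_on with
  | _ t IH =>
  intro y c m hy hc hle hcm hlow ht
  have hle' : ∀ p, c p ≤ y p + (if p = m then 1 else 0) := by
    intro p
    have h := le_app hle p
    simpa [Pi.single_apply] using h
  have hsle : ∑ i, c i ≤ (∑ i, y i) + 1 := by
    have h1 : ∑ i, c i ≤ ∑ i, (y + Pi.single m 1 : Fin n → ℕ) i :=
      Finset.sum_le_sum (fun i _ => le_app hle i)
    rwa [sum_add_single] at h1
  rcases Nat.lt_trichotomy (∑ i, c i) (∑ i, y i) with hlt | heq | hgt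
  · -- grow c toward y
    obtain ⟨w, hw, hcw, hwle⟩ := exch hP hc hy hlt
    have hwle2 : ∀ p, w p ≤ max (c p) (y p) := by
      intro p
      have h := le_app hwle p
      simpa [Pi.sup_apply] using h
    have hcwle : ∀ p, c p ≤ w p := fun p => le_app hcw.le p
    have hwle' : w ≤ y + Pi.single m 1 := by
      intro p
      have h1 := hwle2 p
      have h2 := hle' p
      simp only [Pi.add_apply, Pi.single_apply]
      rcases le_max_iff.mp (le_of_le_of_eq h1 rfl) with h | h <;> split at h2 <;>
        simp_all <;> omega
    have hwm : w m = y m + 1 := by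
      have h1 : w m ≤ y m + 1 := by
        have := le_app hwle' m
        simpa [Pi.single_apply] using this
      have h2 := hcwle m
      omega
    have hwlow : ∀ l, w l < y l → y + Pi.single l 1 ∈ P := fun l hl =>
      hlow l (lt_of_le_of_lt (hcwle l) hl)
    have hsum : ∑ i, c i < ∑ i, w i := sum_lt_of_lt hcw
    exact IH ((∑ i, y i) + 1 - (∑ i, w i)) (by omega) y w m hy hw hwle' hwm hwlow rfl
  · -- stall case
    have hex : ∃ l, c l < y l := by
      by_contra hcon
      push_neg at hcon
      have : ∑ i, y i < ∑ i, c i :=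
        Finset.sum_lt_sum (fun i _ => hcon i) ⟨m, Finset.mem_univ m, by omega⟩
      omega
    obtain ⟨l, hl⟩ := hex
    have hlm : l ≠ m := by
      intro e
      rw [e] at hl
      omega
    set c' := Function.update c l (c l + 1) with hc'
    have hc'le : c' ≤ y + Pi.single m 1 := by
      intro p
      simp only [Pi.add_apply, Pi.single_apply]
      by_cases hp : p = l
      · rw [hp, hc', Function.update_self, if_neg hlm]
        omega
      · rw [hc', Function.update_of_ne hp]
        have := hle' p
        omega
    have hc'sum : ∑ i, c' i = (∑ i, y i) + 1 := by
      have h1 : ∑ i, c' i = (c l + 1) + ∑ i ∈ Finset.univ \ {l}, c i := by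
        rw [hc', Finset.sum_update_of_mem (Finset.mem_univ l)]
      have h2 : ∑ i, c i = ∑ i ∈ Finset.univ \ {l}, c i + c l :=
        Finset.sum_eq_sum_sdiff_singleton_add (Finset.mem_univ l) c
      omega
    have hceq : c' = y + Pi.single m 1 :=
      eq_of_le_of_sum_le hc'le (by rw [hc'sum, sum_add_single])
    have hpts : ∀ p, p ≠ l → c p = y p + (if p = m then 1 else 0) := by
      intro p hp
      have h0 := congrFun hceq p
      rw [hc', Function.update_of_ne hp] at h0
      simpa [Pi.single_apply] using h0
    have hcl : c l + 1 = y l := by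
      have h0 := congrFun hceq l
      rw [hc', Function.update_self] at h0
      simp only [Pi.add_apply, Pi.single_apply, if_neg hlm] at h0
      omega
    have hyl : y + Pi.single l 1 ∈ P := hlow l hl
    have hsum : ∑ i, c i < ∑ i, (y + Pi.single l 1 : Fin n → ℕ) i := by
      rw [sum_add_single]; omega
    obtain ⟨w, hw, hcw, hwle⟩ := exch hP hc hyl hsum
    have hcwle : ∀ p, c p ≤ w p := fun p => le_app hcw.le p
    have hwle2 : ∀ p, w p ≤ max (c p) (y p + (if p = l then 1 else 0)) := by
      intro p
      have h := le_app hwle p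
      simpa [Pi.sup_apply, Pi.single_apply] using h
    have hwp : ∀ p, p ≠ l → w p = c p := by
      intro p hp
      have h1 := hwle2 p
      have h2 := hcwle p
      have h3 := hpts p hp
      rw [if_neg hp] at h1
      rcases le_max_iff.mp h1 with h | h
      · omega
      · split at h3 <;> omega
    have hwl : c l < w l := by
      by_contra hcon
      push_neg at hcon
      have hlec : w ≤ c := by
        intro p
        show w p ≤ c p
        by_cases hp : p = l
        · rw [hp]; exact hcon
        · exact (hwp p hp).le
      exact absurd (le_antisymm hlec hcw.le) (ne_of_gt hcw)
    have hfin : y + Pi.single m 1 ≤ w := by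
      intro p
      simp only [Pi.add_apply, Pi.single_apply]
      by_cases hp : p = l
      · rw [hp, if_neg hlm]
        have := hwl
        have := hcl
        omega
      · have h3 := hpts p hp
        have h4 := (hwp p hp).ge
        omega
    exact down hP hw hfin
  · -- c already full: c = y + ε_m
    have hfull : c = y + Pi.single m 1 := by
      apply eq_of_le_of_sum_le hle
      rw [sum_add_single]; omega
    rwa [← hfull]


lemma restrict_mem (hP : IsDiscretePolymatroid P) {z : Fin n → ℕ} (hz : z ∈ P)
    (A : Finset (Fin n)) : (fun p => if p ∈ A then z p else 0) ∈ P :=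
  down hP hz (fun p => by dsimp only; split <;> omega)

lemma sum_restrict (z : Fin n → ℕ) (A : Finset (Fin n)) :
    ∑ i, (if i ∈ A then z i else 0) = ∑ i ∈ A, z i := by
  rw [Finset.sum_ite_mem, Finset.univ_inter]

/-- the saturated set of `y` is tight. -/
lemma sat_tight (hP : IsDiscretePolymatroid P) {y z : Fin n → ℕ} (A : Finset (Fin n))
    (hy : y ∈ P) (hz : z ∈ P)
    (hA : ∀ k ∈ A, y + Pi.single k 1 ∉ P)
    (hA' : ∀ k, k ∉ A → y + Pi.single k 1 ∈ P) :
    ∑ k ∈ A, z k ≤ ∑ k ∈ A, y k := by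
  by_contra hgt
  push_neg at hgt
  set y1 : Fin n → ℕ := fun p => if p ∈ A then y p else 0 with hy1
  set z1 : Fin n → ℕ := fun p => if p ∈ A then z p else 0 with hz1
  have hy1le : ∀ p, y1 p ≤ y p := by intro p; rw [hy1]; dsimp only; split <;> omega
  have hy1A : ∀ p, p ∈ A → y1 p = y p := by intro p hp; rw [hy1]; simp [hp]
  have hy1nA : ∀ p, p ∉ A → y1 p = 0 := by intro p hp; rw [hy1]; simp [hp]
  have hz1nA : ∀ p, p ∉ A → z1 p = 0 := by intro p hp; rw [hz1]; simp [hp]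
  have hy1P : y1 ∈ P := restrict_mem hP hy A
  have hz1P : z1 ∈ P := restrict_mem hP hz A
  have hsum : ∑ i, y1 i < ∑ i, z1 i := by
    rw [hy1, hz1]
    rw [sum_restrict, sum_restrict]
    exact hgt
  obtain ⟨w, hw, hyw, hwle⟩ := exch hP hy1P hz1P hsum
  obtain ⟨m, hm0⟩ := exists_lt_coord hyw
  have hm : y1 m < w m := hm0
  have hmA : m ∈ A := by
    by_contra hmA
    have h1 : w m ≤ max (y1 m) (z1 m) := by
      have := le_app hwle m
      simpa [Pi.sup_apply] using this
    rw [hy1nA m hmA, hz1nA m hmA] at h1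
    rw [hy1nA m hmA] at hm
    omega
  have hcP : y1 + Pi.single m 1 ∈ P := by
    apply down hP hw
    intro p
    simp only [Pi.add_apply, Pi.single_apply]
    have h2 : y1 p ≤ w p := le_app hyw.le p
    by_cases hp : p = m
    · rw [hp] at h2 ⊢
      rw [if_pos rfl]
      omega
    · rw [if_neg hp]
      omega
  have hfin : y + Pi.single m 1 ∈ P := by
    apply augment hP ((∑ i, y i) + 1 - (∑ i, (y1 + Pi.single m 1 : Fin n → ℕ) i)) y
      (y1 + Pi.single m 1) m hy hcP ?_ ?_ ?_ rfl
    · intro p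
      simp only [Pi.add_apply]
      have := hy1le p
      omega
    · simp only [Pi.add_apply, Pi.single_apply, if_pos rfl, if_true]
      rw [hy1A m hmA]
    · intro l hll
      simp only [Pi.add_apply, Pi.single_apply] at hll
      apply hA'
      intro hlA
      rw [hy1A l hlA] at hll
      split at hll <;> omega
  exact hA m hmA hfin


/-- membership criterion via rank inequalities -/
lemma mem_of_sums (hP : IsDiscretePolymatroid P) {x : Fin n → ℕ}
    (hx : ∀ A : Finset (Fin n), ∃ z ∈ P, ∑ k ∈ A, x k ≤ ∑ k ∈ A, z k) : x ∈ P := by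
  classical
  by_contra hxP
  have hSfin : {y | y ∈ P ∧ y ≤ x}.Finite := hP.2.1.subset (fun y hy => hy.1)
  have hSne : {y | y ∈ P ∧ y ≤ x}.Nonempty :=
    ⟨0, zero_mem hP, fun p => Nat.zero_le _⟩
  obtain ⟨y, hyS, hymax⟩ := Set.Finite.exists_maximalFor (fun y => ∑ i, y i) _ hSfin hSne
  obtain ⟨hyP, hyx⟩ := hyS
  have hymax' : ∀ t, t ∈ P → t ≤ x → ∑ i, t i ≤ ∑ i, y i := by
    intro t ht htx
    rcases le_total (∑ i, t i) (∑ i, y i) with h | h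
    · exact h
    · exact hymax ⟨ht, htx⟩ h
  have hyne : y ≠ x := fun h => hxP (h ▸ hyP)
  obtain ⟨i, hi⟩ : ∃ i, y i < x i := by
    by_contra hcon
    push_neg at hcon
    exact hyne (le_antisymm hyx (fun p => hcon p))
  set A : Finset (Fin n) := Finset.univ.filter (fun k => y + Pi.single k 1 ∉ P) with hAdef
  have hA : ∀ k ∈ A, y + Pi.single k 1 ∉ P := by
    intro k hk
    rw [hAdef] at hk
    exact (Finset.mem_filter.mp hk).2
  have hA' : ∀ k, k ∉ A → y + Pi.single k 1 ∈ P := by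
    intro k hk
    rw [hAdef] at hk
    by_contra hcon
    exact hk (Finset.mem_filter.mpr ⟨Finset.mem_univ k, hcon⟩)
  have hiA : i ∈ A := by
    rw [hAdef]
    refine Finset.mem_filter.mpr ⟨Finset.mem_univ i, fun hmem => ?_⟩
    have hler : y + Pi.single i 1 ≤ x := by
      intro p
      simp only [Pi.add_apply, Pi.single_apply]
      have := le_app hyx p
      by_cases hp : p = i
      · rw [hp] at this ⊢
        rw [if_pos rfl]
        omega
      · rw [if_neg hp]
        omega
    have := hymax' _ hmem hler
    rw [sum_add_single] at this
    omega
  obtain ⟨z, hzP, hzA⟩ := hx A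
  have h1 : ∑ k ∈ A, z k ≤ ∑ k ∈ A, y k := sat_tight hP A hyP hzP hA hA'
  have h2 : ∑ k ∈ A, y k < ∑ k ∈ A, x k :=
    Finset.sum_lt_sum (fun k _ => hyx k) ⟨i, hiA, hi⟩
  omega

/-- doubly tight element for a pair of sets -/
lemma exists_doubly_tight (hP : IsDiscretePolymatroid P) (A B : Finset (Fin n)) :
    ∃ z ∈ P, (∀ t ∈ P, ∑ k ∈ A ∩ B, t k ≤ ∑ k ∈ A ∩ B, z k) ∧
      (∀ t ∈ P, ∑ k ∈ A ∪ B, t k ≤ ∑ k ∈ A ∪ B, z k) := by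
  classical
  obtain ⟨z0, hz0P, hz0max⟩ := exists_max hP (fun z => ∑ k ∈ A ∩ B, z k)
  set M : Set (Fin n → ℕ) :=
    {z | z ∈ P ∧ (∀ p, p ∉ A ∪ B → z p = 0) ∧ ∀ t ∈ P, ∑ k ∈ A ∩ B, t k ≤ ∑ k ∈ A ∩ B, z k}
    with hM
  have hMne : M.Nonempty := by
    refine ⟨fun p => if p ∈ A ∩ B then z0 p else 0, restrict_mem hP hz0P _, ?_, ?_⟩
    · intro p hp
      have : p ∉ A ∩ B := fun h => hp (Finset.mem_union_left B (Finset.mem_inter.mp h).1)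
      simp [this]
    · intro t ht
      have : ∑ k ∈ A ∩ B, (if k ∈ A ∩ B then z0 k else 0) = ∑ k ∈ A ∩ B, z0 k :=
        Finset.sum_congr rfl (fun k hk => by rw [if_pos hk])
      rw [this]
      exact hz0max t ht
  have hMfin : M.Finite := hP.2.1.subset (fun z hz => hz.1)
  obtain ⟨w, hwM, hwmax⟩ := Set.Finite.exists_maximalFor (fun z => ∑ i, z i) _ hMfin hMne
  obtain ⟨hwP, hwsupp, hwtight⟩ := hwM
  have hwmax' : ∀ t ∈ M, ∑ i, t i ≤ ∑ i, w i := by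
    intro t ht
    rcases le_total (∑ i, t i) (∑ i, w i) with h | h
    · exact h
    · exact hwmax ht h
  refine ⟨w, hwP, hwtight, ?_⟩
  intro t htP
  by_contra hcon
  push_neg at hcon
  set t1 : Fin n → ℕ := fun p => if p ∈ A ∪ B then t p else 0 with ht1
  have ht1P : t1 ∈ P := restrict_mem hP htP _
  have hwsum : ∑ i, w i = ∑ k ∈ A ∪ B, w k := by
    rw [← sum_restrict w (A ∪ B)]
    apply Finset.sum_congr rfl
    intro k _
    by_cases hk : k ∈ A ∪ B
    · rw [if_pos hk]
    · rw [if_neg hk, hwsupp k hk]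
  have hsum : ∑ i, w i < ∑ i, t1 i := by
    rw [ht1, sum_restrict, hwsum]
    exact hcon
  obtain ⟨w', hw'P, hww', hw'le⟩ := exch hP hwP ht1P hsum
  have hw'M : w' ∈ M := by
    refine ⟨hw'P, ?_, ?_⟩
    · intro p hp
      have h1 : w' p ≤ max (w p) (t1 p) := by
        have := le_app hw'le p
        simpa [Pi.sup_apply] using this
      have h2 : t1 p = 0 := by rw [ht1]; simp [hp]
      rw [hwsupp p hp, h2] at h1
      omega
    · intro s hs
      have h3 : ∑ k ∈ A ∩ B, w k ≤ ∑ k ∈ A ∩ B, w' k :=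
        Finset.sum_le_sum (fun k _ => le_app hww'.le k)
      exact le_trans (hwtight s hs) h3
  have := hwmax' w' hw'M
  have := sum_lt_of_lt hww'
  omega

/-- tight sets are closed under union and intersection -/
lemma tight_closure (hP : IsDiscretePolymatroid P) {u : Fin n → ℕ} {A B : Finset (Fin n)}
    (hu : u ∈ P) (hA : ∀ t ∈ P, ∑ k ∈ A, t k ≤ ∑ k ∈ A, u k)
    (hB : ∀ t ∈ P, ∑ k ∈ B, t k ≤ ∑ k ∈ B, u k) :
    (∀ t ∈ P, ∑ k ∈ A ∪ B, t k ≤ ∑ k ∈ A ∪ B, u k) ∧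
      (∀ t ∈ P, ∑ k ∈ A ∩ B, t k ≤ ∑ k ∈ A ∩ B, u k) := by
  obtain ⟨z, hzP, hzI, hzU⟩ := exists_doubly_tight hP A B
  have key : ∀ f : Fin n → ℕ, ∑ k ∈ A ∪ B, f k + ∑ k ∈ A ∩ B, f k = ∑ k ∈ A, f k + ∑ k ∈ B, f k :=
    fun f => Finset.sum_union_inter
  have h1 : ∑ k ∈ A, z k ≤ ∑ k ∈ A, u k := hA z hzP
  have h2 : ∑ k ∈ B, z k ≤ ∑ k ∈ B, u k := hB z hzP
  have h3 : ∑ k ∈ A ∩ B, u k ≤ ∑ k ∈ A ∩ B, z k := hzI u hu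
  have h4 : ∑ k ∈ A ∪ B, u k ≤ ∑ k ∈ A ∪ B, z k := hzU u hu
  have kz := key z
  have ku := key u
  constructor
  · intro t ht
    have := hzU t ht
    omega
  · intro t ht
    have := hzI t ht
    omega

/-- characterization of bases -/
lemma isBase_iff (hP : IsDiscretePolymatroid P) {w : Fin n → ℕ} :
    IsBaseOf P w ↔ w ∈ P ∧ ∀ z ∈ P, ∑ i, z i ≤ ∑ i, w i := by
  constructor
  · rintro ⟨hwP, hwmax⟩
    refine ⟨hwP, fun z hz => ?_⟩
    by_contra hcon
    push_neg at hcon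
    obtain ⟨w', hw'P, hww', _⟩ := exch hP hwP hz hcon
    exact absurd (hwmax w' hw'P hww'.le) (ne_of_gt hww')
  · rintro ⟨hwP, hwmax⟩
    refine ⟨hwP, fun v hv hwv => ?_⟩
    exact (eq_of_le_of_sum_le hwv (hwmax v hv)).symm


theorem sym_exch (hP : IsDiscretePolymatroid P) {u v : Fin n → ℕ}
    (hu : IsBaseOf P u) (hv : IsBaseOf P v) {i : Fin n} (hi : v i < u i) :
    ∃ j, u j < v j ∧ IsBaseOf P (u - Pi.single i 1 + Pi.single j 1) ∧
      IsBaseOf P (v - Pi.single j 1 + Pi.single i 1) := by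
  classical
  have huP := hu.1
  have hvP := hv.1
  have humax := ((isBase_iff hP).mp hu).2
  have hvmax := ((isBase_iff hP).mp hv).2
  set FS : Finset (Finset (Fin n)) :=
    Finset.univ.filter (fun A => (∀ t ∈ P, ∑ k ∈ A, t k ≤ ∑ k ∈ A, u k) ∧ i ∉ A) with hFS
  set S : Finset (Fin n) := FS.sup id with hS
  have hSprop : (∀ t ∈ P, ∑ k ∈ S, t k ≤ ∑ k ∈ S, u k) ∧ i ∉ S := by
    rw [hS]
    apply Finset.sup_induction (p := fun A => (∀ t ∈ P, ∑ k ∈ A, t k ≤ ∑ k ∈ A, u k) ∧ i ∉ A)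
    · exact ⟨fun t ht => by simp, fun h => by simp at h⟩
    · intro A hA B hB
      refine ⟨(tight_closure hP huP hA.1 hB.1).1, fun hmem => ?_⟩
      rcases Finset.mem_union.mp hmem with h | h
      exacts [hA.2 h, hB.2 h]
    · intro A hA
      exact (Finset.mem_filter.mp hA).2
  have hSmax : ∀ A : Finset (Fin n),
      (∀ t ∈ P, ∑ k ∈ A, t k ≤ ∑ k ∈ A, u k) → i ∉ A → A ⊆ S := by
    intro A h1 h2
    have hmem : A ∈ FS := Finset.mem_filter.mpr ⟨Finset.mem_univ A, h1, h2⟩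
    exact Finset.le_sup (f := id) hmem
  set FT : Finset (Finset (Fin n)) :=
    Finset.univ.filter (fun A => (∀ t ∈ P, ∑ k ∈ A, t k ≤ ∑ k ∈ A, v k) ∧ i ∈ A) with hFT
  set T : Finset (Fin n) := FT.inf id with hT
  have hTprop : (∀ t ∈ P, ∑ k ∈ T, t k ≤ ∑ k ∈ T, v k) ∧ i ∈ T := by
    rw [hT]
    apply Finset.inf_induction (p := fun A => (∀ t ∈ P, ∑ k ∈ A, t k ≤ ∑ k ∈ A, v k) ∧ i ∈ A)
    · refine ⟨fun t ht => ?_, ?_⟩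
      · rw [Finset.top_eq_univ]
        exact hvmax t ht
      · rw [Finset.top_eq_univ]
        exact Finset.mem_univ i
    · intro A hA B hB
      exact ⟨(tight_closure hP hvP hA.1 hB.1).2, Finset.mem_inter.mpr ⟨hA.2, hB.2⟩⟩
    · intro A hA
      exact (Finset.mem_filter.mp hA).2
  have hTmin : ∀ A : Finset (Fin n),
      (∀ t ∈ P, ∑ k ∈ A, t k ≤ ∑ k ∈ A, v k) → i ∈ A → T ⊆ A := by
    intro A h1 h2
    have hmem : A ∈ FT := Finset.mem_filter.mpr ⟨Finset.mem_univ A, h1, h2⟩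
    exact Finset.inf_le (f := id) hmem
  obtain ⟨z, hzP, hzI, hzU⟩ := exists_doubly_tight hP S T
  have key : ∑ k ∈ S ∪ T, u k + ∑ k ∈ S ∩ T, v k ≤ ∑ k ∈ S, u k + ∑ k ∈ T, v k := by
    have h1 := hzU u huP
    have h2 := hzI v hvP
    have h3 := hSprop.1 z hzP
    have h4 := hTprop.1 z hzP
    have h5 : ∑ k ∈ S ∪ T, z k + ∑ k ∈ S ∩ T, z k = ∑ k ∈ S, z k + ∑ k ∈ T, z k :=
      Finset.sum_union_inter
    omega
  have dec1 : ∑ k ∈ S ∪ T, u k = ∑ k ∈ S, u k + ∑ k ∈ T \ S, u k := by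
    rw [← Finset.union_sdiff_self_eq_union]
    exact Finset.sum_union Finset.sdiff_disjoint.symm
  have dec2 : ∑ k ∈ T, v k = ∑ k ∈ T ∩ S, v k + ∑ k ∈ T \ S, v k :=
    (Finset.sum_inter_add_sum_sdiff T S v).symm
  have hST : ∑ k ∈ S ∩ T, v k = ∑ k ∈ T ∩ S, v k := by rw [Finset.inter_comm]
  have hTSle : ∑ k ∈ T \ S, u k ≤ ∑ k ∈ T \ S, v k := by omega
  have hiTS : i ∈ T \ S := Finset.mem_sdiff.mpr ⟨hTprop.2, hSprop.2⟩
  obtain ⟨j, hjTS, hj⟩ : ∃ j ∈ T \ S, u j < v j := by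
    by_contra hcon
    push_neg at hcon
    have : ∑ k ∈ T \ S, v k < ∑ k ∈ T \ S, u k :=
      Finset.sum_lt_sum (fun k hk => hcon k hk) ⟨i, hiTS, hi⟩
    omega
  have hjT : j ∈ T := (Finset.mem_sdiff.mp hjTS).1
  have hjS : j ∉ S := (Finset.mem_sdiff.mp hjTS).2
  have hij : i ≠ j := fun h => by rw [h] at hi; omega
  have hui : 1 ≤ u i := by omega
  have hvj : 1 ≤ v j := by omega
  -- x = u - ε_i + ε_j
  have hxsum : ∀ A : Finset (Fin n),
      ∑ k ∈ A, (u - Pi.single i 1 + Pi.single j 1 : Fin n → ℕ) k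
        + (if i ∈ A then 1 else 0)
      = ∑ k ∈ A, u k + (if j ∈ A then 1 else 0) := by
    intro A
    have hfun : ∀ p, (u - Pi.single i 1 + Pi.single j 1 : Fin n → ℕ) p + (Pi.single i 1 : Fin n → ℕ) p
        = u p + (Pi.single j 1 : Fin n → ℕ) p := by
      intro p
      simp only [Pi.add_apply, Pi.sub_apply, Pi.single_apply]
      by_cases hpi : p = i
      · rw [hpi, if_pos rfl, if_neg hij]
        omega
      · rw [if_neg hpi]
        omega
    calc ∑ k ∈ A, (u - Pi.single i 1 + Pi.single j 1 : Fin n → ℕ) k + (if i ∈ A then 1 else 0)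
        = ∑ k ∈ A, ((u - Pi.single i 1 + Pi.single j 1 : Fin n → ℕ) k + (Pi.single i 1 : Fin n → ℕ) k) := by
          rw [Finset.sum_add_distrib, sum_single]
      _ = ∑ k ∈ A, (u k + (Pi.single j 1 : Fin n → ℕ) k) := Finset.sum_congr rfl (fun k _ => hfun k)
      _ = ∑ k ∈ A, u k + (if j ∈ A then 1 else 0) := by
          rw [Finset.sum_add_distrib, sum_single]
  have hysum : ∀ A : Finset (Fin n),
      ∑ k ∈ A, (v - Pi.single j 1 + Pi.single i 1 : Fin n → ℕ) k
        + (if j ∈ A then 1 else 0)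
      = ∑ k ∈ A, v k + (if i ∈ A then 1 else 0) := by
    intro A
    have hfun : ∀ p, (v - Pi.single j 1 + Pi.single i 1 : Fin n → ℕ) p + (Pi.single j 1 : Fin n → ℕ) p
        = v p + (Pi.single i 1 : Fin n → ℕ) p := by
      intro p
      simp only [Pi.add_apply, Pi.sub_apply, Pi.single_apply]
      by_cases hpj : p = j
      · rw [hpj, if_pos rfl, if_neg (Ne.symm hij)]
        omega
      · rw [if_neg hpj]
        omega
    calc ∑ k ∈ A, (v - Pi.single j 1 + Pi.single i 1 : Fin n → ℕ) k + (if j ∈ A then 1 else 0)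
        = ∑ k ∈ A, ((v - Pi.single j 1 + Pi.single i 1 : Fin n → ℕ) k + (Pi.single j 1 : Fin n → ℕ) k) := by
          rw [Finset.sum_add_distrib, sum_single]
      _ = ∑ k ∈ A, (v k + (Pi.single i 1 : Fin n → ℕ) k) := Finset.sum_congr rfl (fun k _ => hfun k)
      _ = ∑ k ∈ A, v k + (if i ∈ A then 1 else 0) := by
          rw [Finset.sum_add_distrib, sum_single]
  have hxP : (u - Pi.single i 1 + Pi.single j 1 : Fin n → ℕ) ∈ P := by
    apply mem_of_sums hP
    intro A
    have h := hxsum A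
    by_cases hiA : i ∈ A
    · rw [if_pos hiA] at h
      refine ⟨u, huP, ?_⟩
      split at h <;> omega
    · rw [if_neg hiA] at h
      by_cases hjA : j ∈ A
      · rw [if_pos hjA] at h
        have hnt : ¬ (∀ t ∈ P, ∑ k ∈ A, t k ≤ ∑ k ∈ A, u k) := by
          intro htight
          exact hjS (hSmax A htight hiA hjA)
        push_neg at hnt
        obtain ⟨z', hz'P, hz'⟩ := hnt
        exact ⟨z', hz'P, by omega⟩
      · rw [if_neg hjA] at h
        exact ⟨u, huP, by omega⟩
  have hyP : (v - Pi.single j 1 + Pi.single i 1 : Fin n → ℕ) ∈ P := by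
    apply mem_of_sums hP
    intro A
    have h := hysum A
    by_cases hjA : j ∈ A
    · rw [if_pos hjA] at h
      refine ⟨v, hvP, ?_⟩
      split at h <;> omega
    · rw [if_neg hjA] at h
      by_cases hiA : i ∈ A
      · rw [if_pos hiA] at h
        have hnt : ¬ (∀ t ∈ P, ∑ k ∈ A, t k ≤ ∑ k ∈ A, v k) := by
          intro htight
          exact hjA (hTmin A htight hiA hjT)
        push_neg at hnt
        obtain ⟨z', hz'P, hz'⟩ := hnt
        exact ⟨z', hz'P, by omega⟩
      · rw [if_neg hiA] at h
        exact ⟨v, hvP, by omega⟩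
  have hxsumu : ∑ k, (u - Pi.single i 1 + Pi.single j 1 : Fin n → ℕ) k = ∑ k, u k := by
    have h := hxsum Finset.univ
    rw [if_pos (Finset.mem_univ i), if_pos (Finset.mem_univ j)] at h
    omega
  have hysumv : ∑ k, (v - Pi.single j 1 + Pi.single i 1 : Fin n → ℕ) k = ∑ k, v k := by
    have h := hysum Finset.univ
    rw [if_pos (Finset.mem_univ i), if_pos (Finset.mem_univ j)] at h
    omega
  refine ⟨j, hj, ?_, ?_⟩
  · refine (isBase_iff hP).mpr ⟨hxP, fun z' hz' => ?_⟩
    rw [hxsumu]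
    exact humax z' hz'
  · refine (isBase_iff hP).mpr ⟨hyP, fun z' hz' => ?_⟩
    rw [hysumv]
    exact hvmax z' hz'

end DPM


/-- Lemma 5.4: for bases `u_1, …, u_d ∈ B` of a discrete polymatroid, modulo
the ideal generated by the symmetric exchange relations the monomial
`x_{u_1}⋯x_{u_d}` can be rewritten as `x_{v_1}⋯x_{v_d}` with
`v_1 + ⋯ + v_d = u_1 + ⋯ + u_d` and `|v_j(i) − v_k(i)| ≤ 1` for all `i, j, k`. -/
theorem rewrite_modulo_symmetric_exchange (K : Type*) [Field K] {n d : ℕ}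
    (P B : Set (Fin n → ℕ)) (hP : IsDiscretePolymatroid P)
    (hB : ∀ u, u ∈ B ↔ IsBaseOf P u)
    (u : Fin d → B) :
    ∃ v : Fin d → B,
      (∑ k, (u k : Fin n → ℕ)) = (∑ k, (v k : Fin n → ℕ)) ∧
      (∀ (i : Fin n) (j k : Fin d),
        |((v j : Fin n → ℕ) i : ℤ) - ((v k : Fin n → ℕ) i : ℤ)| ≤ 1) ∧
      (∏ k, MvPolynomial.X (u k) - ∏ k, MvPolynomial.X (v k) : MvPolynomial B K)
        ∈ Ideal.span (symExchRels K B) := by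
  classical
  suffices H : ∀ (N : ℕ) (u : Fin d → B),
      (∑ m, ∑ p, ((u m : Fin n → ℕ) p)^2) ≤ N →
      ∃ v : Fin d → B,
        (∑ k, (u k : Fin n → ℕ)) = (∑ k, (v k : Fin n → ℕ)) ∧
        (∀ (i : Fin n) (j k : Fin d),
          |((v j : Fin n → ℕ) i : ℤ) - ((v k : Fin n → ℕ) i : ℤ)| ≤ 1) ∧
        (∏ k, MvPolynomial.X (u k) - ∏ k, MvPolynomial.X (v k) : MvPolynomial B K)
          ∈ Ideal.span (symExchRels K B) by
    exact H _ u le_rfl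
  intro N
  induction N using Nat.strong_induction_on with
  | _ N IH =>
  intro u hN
  by_cases hbal : ∀ (i : Fin n) (j k : Fin d),
      |((u j : Fin n → ℕ) i : ℤ) - ((u k : Fin n → ℕ) i : ℤ)| ≤ 1
  · exact ⟨u, rfl, hbal, by rw [sub_self]; exact Ideal.zero_mem _⟩
  · push_neg at hbal
    obtain ⟨i, j0, k0, hjk⟩ := hbal
    have key : ∀ j k : Fin d, ((u k : Fin n → ℕ) i) + 2 ≤ ((u j : Fin n → ℕ) i) →
        ∃ v : Fin d → B,
          (∑ m, (u m : Fin n → ℕ)) = (∑ m, (v m : Fin n → ℕ)) ∧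
          (∀ (i : Fin n) (j k : Fin d),
            |((v j : Fin n → ℕ) i : ℤ) - ((v k : Fin n → ℕ) i : ℤ)| ≤ 1) ∧
          (∏ m, MvPolynomial.X (u m) - ∏ m, MvPolynomial.X (v m) : MvPolynomial B K)
            ∈ Ideal.span (symExchRels K B) := by
      intro j k hord
      have hjk' : j ≠ k := by
        intro e
        rw [e] at hord
        omega
      have hbj : IsBaseOf P (u j : Fin n → ℕ) := (hB _).mp (u j).2
      have hbk : IsBaseOf P (u k : Fin n → ℕ) := (hB _).mp (u k).2
      have hik : ((u k : Fin n → ℕ)) i < (u j : Fin n → ℕ) i := by omega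
      obtain ⟨l, hl, hxB, hyB⟩ := DPM.sym_exch hP hbj hbk hik
      have hil : i ≠ l := by
        intro e
        rw [← e] at hl
        omega
      set xv : Fin n → ℕ := (u j : Fin n → ℕ) - Pi.single i 1 + Pi.single l 1 with hxv
      set yv : Fin n → ℕ := (u k : Fin n → ℕ) - Pi.single l 1 + Pi.single i 1 with hyv
      have hxB' : xv ∈ B := (hB _).mpr hxB
      have hyB' : yv ∈ B := (hB _).mpr hyB
      set w : Fin d → B := Function.update (Function.update u j ⟨xv, hxB'⟩) k ⟨yv, hyB'⟩ with hw
      have hwj : w j = (⟨xv, hxB'⟩ : B) := by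
        rw [hw, Function.update_of_ne hjk', Function.update_self]
      have hwk : w k = (⟨yv, hyB'⟩ : B) := by
        rw [hw, Function.update_self]
      have hwm : ∀ m, m ≠ j → m ≠ k → w m = u m := by
        intro m h1 h2
        rw [hw, Function.update_of_ne h2, Function.update_of_ne h1]
      -- pointwise values
      have hxvi : xv i = (u j : Fin n → ℕ) i - 1 := by
        rw [hxv]
        simp [Pi.single_apply, hil]
      have hxvl : xv l = (u j : Fin n → ℕ) l + 1 := by
        rw [hxv]
        simp [Pi.single_apply, Ne.symm hil]
      have hxvo : ∀ p, p ≠ i → p ≠ l → xv p = (u j : Fin n → ℕ) p := by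
        intro p h1 h2
        rw [hxv]
        simp [Pi.single_apply, h1, h2]
      have hyvi : yv i = (u k : Fin n → ℕ) i + 1 := by
        rw [hyv]
        simp [Pi.single_apply, hil]
      have hyvl : yv l = (u k : Fin n → ℕ) l - 1 := by
        rw [hyv]
        simp [Pi.single_apply, Ne.symm hil]
      have hyvo : ∀ p, p ≠ i → p ≠ l → yv p = (u k : Fin n → ℕ) p := by
        intro p h1 h2
        rw [hyv]
        simp [Pi.single_apply, h1, h2]
      have hkmem : k ∈ Finset.univ.erase j :=
        Finset.mem_erase.mpr ⟨Ne.symm hjk', Finset.mem_univ k⟩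
      -- sum equality
      have hsumdec : ∀ f : Fin d → (Fin n → ℕ),
          ∑ m, f m = f j + (f k + ∑ m ∈ (Finset.univ.erase j).erase k, f m) := by
        intro f
        rw [Finset.add_sum_erase _ f hkmem, Finset.add_sum_erase _ f (Finset.mem_univ j)]
      have hsumdec2 : ∀ f : Fin d → ℕ,
          ∑ m, f m = f j + (f k + ∑ m ∈ (Finset.univ.erase j).erase k, f m) := by
        intro f
        rw [Finset.add_sum_erase _ f hkmem, Finset.add_sum_erase _ f (Finset.mem_univ j)]
      have hxy : xv + yv = (u j : Fin n → ℕ) + (u k : Fin n → ℕ) := by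
        funext p
        show xv p + yv p = (u j : Fin n → ℕ) p + (u k : Fin n → ℕ) p
        by_cases h1 : p = i
        · rw [h1, hxvi, hyvi]; omega
        · by_cases h2 : p = l
          · rw [h2, hxvl, hyvl]; omega
          · rw [hxvo p h1 h2, hyvo p h1 h2]
      have hsumw : (∑ m, (u m : Fin n → ℕ)) = ∑ m, (w m : Fin n → ℕ) := by
        rw [hsumdec (fun m => (u m : Fin n → ℕ)), hsumdec (fun m => (w m : Fin n → ℕ))]
        have hrest : ∑ m ∈ (Finset.univ.erase j).erase k, (w m : Fin n → ℕ)
            = ∑ m ∈ (Finset.univ.erase j).erase k, (u m : Fin n → ℕ) := by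
          apply Finset.sum_congr rfl
          intro m hm
          have h2 := Finset.mem_erase.mp hm
          have h1 := Finset.mem_erase.mp h2.2
          rw [hwm m h1.1 h2.1]
        rw [hrest, hwj, hwk]
        have : xv + yv = _ := hxy
        dsimp only
        rw [← add_assoc, ← add_assoc, hxy]
      -- potential decrease
      have hΦdec : (∑ m, ∑ p, ((w m : Fin n → ℕ) p)^2) < ∑ m, ∑ p, ((u m : Fin n → ℕ) p)^2 := by
        rw [hsumdec2 (fun m => ∑ p, ((u m : Fin n → ℕ) p)^2),
          hsumdec2 (fun m => ∑ p, ((w m : Fin n → ℕ) p)^2)]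
        have hrest : ∑ m ∈ (Finset.univ.erase j).erase k, (∑ p, ((w m : Fin n → ℕ) p)^2)
            = ∑ m ∈ (Finset.univ.erase j).erase k, (∑ p, ((u m : Fin n → ℕ) p)^2) := by
          apply Finset.sum_congr rfl
          intro m hm
          have h2 := Finset.mem_erase.mp hm
          have h1 := Finset.mem_erase.mp h2.2
          rw [hwm m h1.1 h2.1]
        rw [hrest, hwj, hwk]
        dsimp only
        have hhead : (∑ p, (xv p)^2) + (∑ p, (yv p)^2)
            < (∑ p, ((u j : Fin n → ℕ) p)^2) + ∑ p, ((u k : Fin n → ℕ) p)^2 := by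
          rw [← Finset.sum_add_distrib, ← Finset.sum_add_distrib]
          apply Finset.sum_lt_sum
          · intro p _
            by_cases h1 : p = i
            · obtain ⟨a', ha'⟩ : ∃ a', (u j : Fin n → ℕ) i = a' + 1 := ⟨(u j : Fin n → ℕ) i - 1, by omega⟩
              rw [h1, hxvi, hyvi, ha']
              have : (u k : Fin n → ℕ) i + 1 ≤ a' := by omega
              simp only [Nat.add_sub_cancel]
              nlinarith
            · by_cases h2 : p = l
              · obtain ⟨e', he'⟩ : ∃ e', (u k : Fin n → ℕ) l = e' + 1 := ⟨(u k : Fin n → ℕ) l - 1, by omega⟩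
                rw [h2, hxvl, hyvl, he']
                have : (u j : Fin n → ℕ) l ≤ e' := by omega
                simp only [Nat.add_sub_cancel]
                nlinarith
              · rw [hxvo p h1 h2, hyvo p h1 h2]
          · refine ⟨i, Finset.mem_univ i, ?_⟩
            obtain ⟨a', ha'⟩ : ∃ a', (u j : Fin n → ℕ) i = a' + 1 := ⟨(u j : Fin n → ℕ) i - 1, by omega⟩
            rw [hxvi, hyvi, ha']
            have : (u k : Fin n → ℕ) i + 1 ≤ a' := by omega
            simp only [Nat.add_sub_cancel]
            nlinarith
        omega
      -- ideal step
      have hproddec : ∀ f : Fin d → MvPolynomial B K,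
          ∏ m, f m = f j * (f k * ∏ m ∈ (Finset.univ.erase j).erase k, f m) := by
        intro f
        rw [Finset.mul_prod_erase _ f hkmem, Finset.mul_prod_erase _ f (Finset.mem_univ j)]
      have hgen : (MvPolynomial.X (u j) * MvPolynomial.X (u k) -
          MvPolynomial.X (⟨xv, hxB'⟩ : B) * MvPolynomial.X (⟨yv, hyB'⟩ : B) : MvPolynomial B K)
          ∈ symExchRels K B :=
        ⟨u j, u k, ⟨xv, hxB'⟩, ⟨yv, hyB'⟩, i, l, hik, hl, rfl, rfl, rfl⟩
      have hdiff : (∏ m, MvPolynomial.X (u m) - ∏ m, MvPolynomial.X (w m) : MvPolynomial B K)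
          = (MvPolynomial.X (u j) * MvPolynomial.X (u k) -
              MvPolynomial.X (⟨xv, hxB'⟩ : B) * MvPolynomial.X (⟨yv, hyB'⟩ : B)) *
            ∏ m ∈ (Finset.univ.erase j).erase k, MvPolynomial.X (u m) := by
        rw [hproddec (fun m => MvPolynomial.X (u m)), hproddec (fun m => MvPolynomial.X (w m))]
        have hrest : ∏ m ∈ (Finset.univ.erase j).erase k, (MvPolynomial.X (w m) : MvPolynomial B K)
            = ∏ m ∈ (Finset.univ.erase j).erase k, MvPolynomial.X (u m) := by
          apply Finset.prod_congr rfl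
          intro m hm
          have h2 := Finset.mem_erase.mp hm
          have h1 := Finset.mem_erase.mp h2.2
          rw [hwm m h1.1 h2.1]
        rw [hrest, hwj, hwk]
        ring
      have hstep : (∏ m, MvPolynomial.X (u m) - ∏ m, MvPolynomial.X (w m) : MvPolynomial B K)
          ∈ Ideal.span (symExchRels K B) := by
        rw [hdiff]
        exact Ideal.mul_mem_right _ _ (Ideal.subset_span hgen)
      obtain ⟨v, h1, h2, h3⟩ := IH (∑ m, ∑ p, ((w m : Fin n → ℕ) p)^2)
        (lt_of_lt_of_le hΦdec hN) w le_rfl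
      refine ⟨v, ?_, h2, ?_⟩
      · rw [hsumw]
        exact h1
      · have hsplit : (∏ m, MvPolynomial.X (u m) - ∏ m, MvPolynomial.X (v m) : MvPolynomial B K)
            = (∏ m, MvPolynomial.X (u m) - ∏ m, MvPolynomial.X (w m))
              + (∏ m, MvPolynomial.X (w m) - ∏ m, MvPolynomial.X (v m)) := by ring
        rw [hsplit]
        exact Ideal.add_mem _ hstep h3
    have hcase : ((u k0 : Fin n → ℕ) i) + 2 ≤ ((u j0 : Fin n → ℕ) i) ∨
        ((u j0 : Fin n → ℕ) i) + 2 ≤ ((u k0 : Fin n → ℕ) i) := by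
      rcases abs_cases (((u j0 : Fin n → ℕ) i : ℤ) - ((u k0 : Fin n → ℕ) i : ℤ)) with
        ⟨h1, h2⟩ | ⟨h1, h2⟩ <;> omega
    rcases hcase with h | h
    · exact key j0 k0 h
    · exact key k0 j0 h
end

section
/- Let K be a field and P ⊆ ℤ_+^n a discrete polymatroid. Let K[P] be the K-subalgebra of the polynomial ring K[t_1,…,t_n,s] generated by the monomials t^u s = t_1^{u(1)}⋯t_n^{u(n)} s for u ∈ P. Then K[P] is a normal domain, i.e., it is integrally closed in its field of fractions. -/
namespace PolyNormal

open Finset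

variable {n : ℕ}

/-- The rank function of a finite set of integer vectors. -/
noncomputable def rk (P : Set (Fin n → ℕ)) (A : Finset (Fin n)) : ℕ :=
  sSup ((fun u => ∑ i ∈ A, u i) '' P)

variable {P : Set (Fin n → ℕ)}

lemma zero_mem (hP : IsDiscretePolymatroid P) : (0 : Fin n → ℕ) ∈ P := by
  obtain ⟨⟨u, hu⟩, -, hdown, -⟩ := hP
  exact hdown u hu 0 (fun i => Nat.zero_le _)

lemma sum_le_rk (hP : IsDiscretePolymatroid P) {u : Fin n → ℕ} (hu : u ∈ P)
    (A : Finset (Fin n)) : ∑ i ∈ A, u i ≤ rk P A :=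
  le_csSup ((hP.2.1.image _).bddAbove) ⟨u, hu, rfl⟩

lemma exists_rk (hP : IsDiscretePolymatroid P) (A : Finset (Fin n)) :
    ∃ u ∈ P, (∀ i, i ∉ A → u i = 0) ∧ ∑ i ∈ A, u i = rk P A := by
  obtain ⟨hne, hfin, hdown, -⟩ := hP
  have h1 : ((fun u => ∑ i ∈ A, u i) '' P).Nonempty := hne.image _
  have h2 : rk P A ∈ (fun u => ∑ i ∈ A, u i) '' P :=
    Set.Nonempty.csSup_mem h1 (hfin.image _)
  obtain ⟨u, hu, hsum⟩ := h2
  refine ⟨fun i => if i ∈ A then u i else 0, hdown u hu _ (fun i => ?_), fun i hi => if_neg hi, ?_⟩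
  · by_cases h : i ∈ A <;> simp [h]
  · rw [← hsum]; exact Finset.sum_congr rfl (fun i hi => if_pos hi)

lemma rk_mono (hP : IsDiscretePolymatroid P) {A B : Finset (Fin n)} (hAB : A ⊆ B) :
    rk P A ≤ rk P B := by
  obtain ⟨u, hu, -, hsum⟩ := exists_rk hP A
  calc rk P A = ∑ i ∈ A, u i := hsum.symm
    _ ≤ ∑ i ∈ B, u i := Finset.sum_le_sum_of_subset hAB
    _ ≤ rk P B := sum_le_rk hP hu B

@[simp] lemma rk_empty (hP : IsDiscretePolymatroid P) : rk P ∅ = 0 := by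
  obtain ⟨u, hu, -, hsum⟩ := exists_rk hP ∅
  simp at hsum; omega

lemma sum_lt_sum_of_lt {u w : Fin n → ℕ} (h : u < w) : ∑ i, u i < ∑ i, w i := by
  rw [Pi.lt_def] at h
  obtain ⟨hle, i, hi⟩ := h
  exact Finset.sum_lt_sum (fun j _ => hle j) ⟨i, Finset.mem_univ i, hi⟩

/-- Augmentation: any `u ∈ P` can be increased inside `u ⊔ v` until it has modulus
at least that of `v`. -/
lemma aug (hP : IsDiscretePolymatroid P) :
    ∀ u ∈ P, ∀ v ∈ P, ∃ w ∈ P, u ≤ w ∧ w ≤ u ⊔ v ∧ ∑ i, v i ≤ ∑ i, w i := by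
  obtain ⟨-, -, -, hexch⟩ := hP
  intro u hu v hv
  by_cases hle : ∑ i, v i ≤ ∑ i, u i
  · exact ⟨u, hu, le_refl u, le_sup_left, hle⟩
  push_neg at hle
  -- strong induction on the gap
  have : ∀ (d : ℕ), ∀ u ∈ P, (∑ i, v i) - (∑ i, u i) ≤ d →
      ∃ w ∈ P, u ≤ w ∧ w ≤ u ⊔ v ∧ ∑ i, v i ≤ ∑ i, w i := by
    intro d
    induction d with
    | zero =>
      intro u hu hgap
      exact ⟨u, hu, le_refl u, le_sup_left, by omega⟩
    | succ d ih =>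
      intro u hu hgap
      by_cases h : ∑ i, v i ≤ ∑ i, u i
      · exact ⟨u, hu, le_refl u, le_sup_left, h⟩
      push_neg at h
      obtain ⟨w1, hw1, hlt, hle1⟩ := hexch u hu v hv h
      have hsumlt : ∑ i, u i < ∑ i, w1 i := sum_lt_sum_of_lt hlt
      obtain ⟨w, hw, hw1w, hwle, hwsum⟩ := ih w1 hw1 (by omega)
      refine ⟨w, hw, le_trans hlt.le hw1w, ?_, hwsum⟩
      calc w ≤ w1 ⊔ v := hwle
        _ ≤ (u ⊔ v) ⊔ v := sup_le_sup_right hle1 v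
        _ = u ⊔ v := by rw [sup_assoc, sup_idem]
  exact this ((∑ i, v i) - (∑ i, u i)) u hu le_rfl

end PolyNormal

namespace PolyNormal
open Finset
variable {n : ℕ} {P : Set (Fin n → ℕ)}

/-- Submodularity of the rank function of a discrete polymatroid. -/
lemma rk_submod (hP : IsDiscretePolymatroid P) (A B : Finset (Fin n)) :
    rk P (A ∪ B) + rk P (A ∩ B) ≤ rk P A + rk P B := by
  obtain ⟨u, hu, hu0, husum⟩ := exists_rk hP (A ∩ B)
  obtain ⟨v, hv, hv0, hvsum⟩ := exists_rk hP (A ∪ B)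
  obtain ⟨w, hw, huw, hwle, hwsum⟩ := aug hP u hu v hv
  -- w is supported on A ∪ B
  have hw0 : ∀ i, i ∉ A ∪ B → w i = 0 := by
    intro i hi
    have h1 : u i = 0 := hu0 i (fun h => hi (Finset.mem_union.mpr (Or.inl (Finset.mem_inter.mp h).1)))
    have h2 : v i = 0 := hv0 i hi
    have := hwle i
    simp only [Pi.sup_apply, h1, h2] at this
    omega
  have hsum_w : ∑ i, w i = ∑ i ∈ A ∪ B, w i := by
    rw [← Finset.sum_subset (Finset.subset_univ (A ∪ B)) (fun i _ hi => hw0 i hi)]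
  have hsum_v : ∑ i, v i = ∑ i ∈ A ∪ B, v i := by
    rw [← Finset.sum_subset (Finset.subset_univ (A ∪ B)) (fun i _ hi => hv0 i hi)]
  have h1 : rk P (A ∪ B) ≤ ∑ i ∈ A ∪ B, w i := by
    rw [← hvsum, ← hsum_v, ← hsum_w] at *; omega
  have h2 : rk P (A ∩ B) ≤ ∑ i ∈ A ∩ B, w i := by
    rw [← husum]
    exact Finset.sum_le_sum (fun i _ => huw i)
  have h3 := sum_le_rk hP hw A
  have h4 := sum_le_rk hP hw B
  have h5 : ∑ i ∈ A ∪ B, w i + ∑ i ∈ A ∩ B, w i = ∑ i ∈ A, w i + ∑ i ∈ B, w i :=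
    Finset.sum_union_inter
  omega

/-- The "independence polytope" of a bounded integer-valued function on subsets. -/
def Qset (σ : Finset (Fin n) → ℕ) : Set (Fin n → ℕ) :=
  {x | ∀ A : Finset (Fin n), ∑ i ∈ A, x i ≤ σ A}

lemma Qset_finite (σ : Finset (Fin n) → ℕ) : (Qset σ).Finite := by
  have : Qset σ ⊆ Set.Icc 0 (fun i : Fin n => σ {i}) := by
    intro x hx
    refine ⟨fun i => Nat.zero_le _, fun i => ?_⟩
    have := hx {i}
    simpa using this
  exact (Set.finite_Icc _ _).subset this

/-- Union of tight sets is tight, given submodularity. -/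
lemma tight_union {σ : Finset (Fin n) → ℕ}
    (hsub : ∀ A B, σ (A ∪ B) + σ (A ∩ B) ≤ σ A + σ B)
    {x : Fin n → ℕ} (hx : x ∈ Qset σ) {A B : Finset (Fin n)}
    (hA : ∑ i ∈ A, x i = σ A) (hB : ∑ i ∈ B, x i = σ B) :
    ∑ i ∈ A ∪ B, x i = σ (A ∪ B) := by
  have h1 := hx (A ∪ B)
  have h2 := hx (A ∩ B)
  have h3 := hsub A B
  have h5 : ∑ i ∈ A ∪ B, x i + ∑ i ∈ A ∩ B, x i = ∑ i ∈ A, x i + ∑ i ∈ B, x i :=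
    Finset.sum_union_inter
  omega

/-- For submodular, normalized `σ`, the integer points of the polymatroid polytope
form a discrete polymatroid. -/
lemma Qset_polymatroid {σ : Finset (Fin n) → ℕ}
    (hsub : ∀ A B, σ (A ∪ B) + σ (A ∩ B) ≤ σ A + σ B) (h0 : σ ∅ = 0) :
    IsDiscretePolymatroid (Qset σ) := by
  refine ⟨⟨0, fun A => by simp⟩, Qset_finite σ, ?_, ?_⟩
  · intro u hu v hvu A
    exact le_trans (Finset.sum_le_sum (fun i _ => hvu i)) (hu A)
  · intro x hx y hy hsum
    -- find i with x i < y i and x + e_i ∈ Qset σ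
    by_contra hcon
    push_neg at hcon
    -- for each i with x i < y i there is a tight set containing i
    have key : ∀ i : Fin n, x i < y i → ∃ A : Finset (Fin n), i ∈ A ∧ ∑ j ∈ A, x j = σ A := by
      intro i hi
      set x' : Fin n → ℕ := fun j => x j + (if j = i then 1 else 0) with hx'
      have hnot : x' ∉ Qset σ := by
        intro hmem
        refine hcon x' hmem ?_ ?_
        · constructor
          · intro j; by_cases h : j = i <;> simp [hx', h]
          · intro h
            have := h i
            simp [hx'] at this
        · intro j
          by_cases h : j = i <;> simp [hx', h, Pi.sup_apply] <;> omega
      simp only [Qset, Set.mem_setOf_eq, not_forall] at hnot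
      obtain ⟨A, hA⟩ := hnot
      push_neg at hA
      have hiA : i ∈ A := by
        by_contra hiA
        have heq : ∑ j ∈ A, x' j = ∑ j ∈ A, x j := by
          refine Finset.sum_congr rfl (fun j hj => ?_)
          have : j ≠ i := fun h => hiA (h ▸ hj)
          simp [hx', this]
        rw [heq] at hA
        exact absurd (hx A) (by omega)
      refine ⟨A, hiA, le_antisymm (hx A) ?_⟩
      have heq : ∑ j ∈ A, x' j = (∑ j ∈ A, x j) + 1 := by
        simp only [hx', Finset.sum_add_distrib]
        have : ∑ j ∈ A, (if j = i then 1 else 0) = 1 := by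
          rw [Finset.sum_eq_single i (fun j _ hj => if_neg hj) (fun h => absurd hiA h)]
          simp
        omega
      omega
    -- choose tight sets and take their union
    classical
    let D : Finset (Fin n) := Finset.univ.filter (fun i => x i < y i)
    have choice : ∀ i ∈ D, ∃ A : Finset (Fin n), i ∈ A ∧ ∑ j ∈ A, x j = σ A := by
      intro i hi
      exact key i (by simpa [D] using hi)
    -- build the union by induction over D
    have : ∃ T : Finset (Fin n), (∀ i ∈ D, i ∈ T) ∧ ∑ j ∈ T, x j = σ T := by
      classical
      refine Finset.induction_on D ?_ ?_ (motive := fun D' => (∀ i ∈ D', x i < y i) → ∃ T, (∀ i ∈ D', i ∈ T) ∧ ∑ j ∈ T, x j = σ T) ?_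
      · intro _; exact ⟨∅, by simp, by simp [h0]⟩
      · intro i s his ih hall
        obtain ⟨T, hT1, hT2⟩ := ih (fun j hj => hall j (Finset.mem_insert_of_mem hj))
        obtain ⟨A, hiA, hA⟩ := key i (hall i (Finset.mem_insert_self i s))
        refine ⟨A ∪ T, ?_, tight_union hsub hx hA hT2⟩
        intro j hj
        rcases Finset.mem_insert.mp hj with h | h
        · exact Finset.mem_union.mpr (Or.inl (h ▸ hiA))
        · exact Finset.mem_union.mpr (Or.inr (hT1 j h))
      · intro i hi
        simpa [D] using hi
    obtain ⟨T, hDT, hT⟩ := this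
    -- y is ≤ x outside T, and bounded by σ T = ∑_T x inside
    have hyx : ∑ i, y i ≤ ∑ i, x i := by
      have hsplit_x : ∑ i, x i = ∑ i ∈ T, x i + ∑ i ∈ Tᶜ, x i := by
        rw [← Finset.sum_add_sum_compl T x]
      have hsplit_y : ∑ i, y i = ∑ i ∈ T, y i + ∑ i ∈ Tᶜ, y i := by
        rw [← Finset.sum_add_sum_compl T y]
      have h1 : ∑ i ∈ T, y i ≤ σ T := hy T
      have h2 : ∑ i ∈ Tᶜ, y i ≤ ∑ i ∈ Tᶜ, x i := by
        refine Finset.sum_le_sum (fun i hi => ?_)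
        by_contra h
        push_neg at h
        have : i ∈ D := by simp [D]; omega
        exact absurd (hDT i this) (by simpa using hi)
      omega
    omega
end PolyNormal

namespace PolyNormal
open Finset
variable {n : ℕ} {P : Set (Fin n → ℕ)}

/-- unit vector -/
def ee (i : Fin n) : Fin n → ℕ := fun j => if j = i then 1 else 0

lemma sum_ee (i : Fin n) (A : Finset (Fin n)) :
    ∑ j ∈ A, ee i j = if i ∈ A then 1 else 0 := by
  unfold ee
  by_cases h : i ∈ A
  · rw [Finset.sum_eq_single i (fun j _ hj => if_neg hj) (fun hh => absurd h hh)]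
    simp [h]
  · rw [if_neg h]
    refine Finset.sum_eq_zero (fun j hj => if_neg ?_)
    intro he; subst he; exact h hj

lemma ee_mem (hP : IsDiscretePolymatroid P) {i : Fin n} (h : 1 ≤ rk P {i}) :
    ee i ∈ P := by
  obtain ⟨u, hu, -, hsum⟩ := exists_rk hP {i}
  simp only [Finset.sum_singleton] at hsum
  refine hP.2.2.1 u hu _ (fun j => ?_)
  unfold ee
  by_cases hj : j = i
  · subst hj; simp; omega
  · simp [hj]

/-- contraction of a polymatroid by one unit at coordinate `i` -/
def contr (P : Set (Fin n → ℕ)) (i : Fin n) : Set (Fin n → ℕ) :=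
  {w | w + ee i ∈ P}

lemma contr_polymatroid (hP : IsDiscretePolymatroid P) {i : Fin n} (hi : ee i ∈ P) :
    IsDiscretePolymatroid (contr P i) := by
  obtain ⟨hne, hfin, hdown, hexch⟩ := hP
  refine ⟨⟨0, by simpa [contr] using hi⟩, ?_, ?_, ?_⟩
  · have : contr P i = (fun w => w + ee i) ⁻¹' P := rfl
    rw [this]
    exact Set.Finite.preimage (Set.injOn_of_injective (fun a b hab => by
      funext j; have := congrFun hab j; simp at this; omega)) hfin
  · intro u hu v hvu
    refine hdown (u + ee i) hu (v + ee i) (fun j => ?_)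
    have h1 : v j ≤ u j := hvu j
    show v j + ee i j ≤ u j + ee i j
    omega
  · intro w1 h1 w2 h2 hlt
    have hsum : ∀ w : Fin n → ℕ, ∑ j, (w + ee i) j = (∑ j, w j) + 1 := by
      intro w
      simp only [Pi.add_apply, Finset.sum_add_distrib]
      rw [sum_ee]
      simp
    obtain ⟨w, hw, hwlt, hwle⟩ := hexch (w1 + ee i) h1 (w2 + ee i) h2 (by rw [hsum, hsum]; omega)
    have hge : ∀ j, ee i j ≤ w j := fun j => le_trans (by simp) (hwlt.le j)
    refine ⟨fun j => w j - ee i j, ?_, ?_, ?_⟩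
    · show (fun j => w j - ee i j) + ee i ∈ P
      have : (fun j => w j - ee i j) + ee i = w := by
        funext j; have := hge j; simp at *; omega
      rwa [this]
    · rw [Pi.lt_def] at hwlt ⊢
      obtain ⟨hle, j, hj⟩ := hwlt
      constructor
      · intro k
        have h1 : (w1 + ee i) k ≤ w k := hle k
        have h2 := hge k
        simp only [Pi.add_apply] at h1
        show w1 k ≤ w k - ee i k
        omega
      · refine ⟨j, ?_⟩
        have h1 := hge j
        simp only [Pi.add_apply] at hj
        show w1 j < w j - ee i j
        omega
    · intro k
      have h1 : w k ≤ ((w1 + ee i) ⊔ (w2 + ee i)) k := hwle k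
      have h2 := hge k
      simp only [Pi.sup_apply, Pi.add_apply] at h1
      show w k - ee i k ≤ (w1 ⊔ w2) k
      simp only [Pi.sup_apply]
      omega

/-- contraction decreases rank by at most one -/
lemma rk_contr_ge (hP : IsDiscretePolymatroid P) {i : Fin n} (hi : ee i ∈ P)
    (A : Finset (Fin n)) : rk P A ≤ rk (contr P i) A + 1 := by
  obtain ⟨w, hw, hw0, hwsum⟩ := exists_rk hP A
  obtain ⟨x, hx, hex, hxle, hxsum⟩ := aug hP (ee i) hi w hw
  have hx0 : ∀ j, j ∉ A → j ≠ i → x j = 0 := by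
    intro j hj hji
    have := hxle j
    simp only [Pi.sup_apply] at this
    have h2 := hw0 j hj
    unfold ee at this
    simp [hji] at this
    omega
  have hxi : i ∉ A → x i ≤ 1 := by
    intro hiA
    have := hxle i
    have h2 := hw0 i hiA
    simp only [Pi.sup_apply] at this
    unfold ee at this
    simp at this
    omega
  have hmem : (fun j => x j - ee i j) ∈ contr P i := by
    show (fun j => x j - ee i j) + ee i ∈ P
    have : (fun j => x j - ee i j) + ee i = x := by
      funext j
      have h2 : ee i j ≤ x j := hex j
      show x j - ee i j + ee i j = x j
      omega
    rwa [this]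
  have hbound := sum_le_rk (contr_polymatroid hP hi) hmem A
  -- ∑_A (x - e_i) ≥ rk P A - 1
  have hsplit : ∑ j, x j = ∑ j ∈ A, x j + ∑ j ∈ Aᶜ, x j := (Finset.sum_add_sum_compl A x).symm
  have hA' : (∑ j ∈ A, (x j - ee i j)) + (if i ∈ A then 1 else 0) = ∑ j ∈ A, x j := by
    rw [← sum_ee i A, ← Finset.sum_add_distrib]
    refine Finset.sum_congr rfl (fun j hj => ?_)
    have h2 : ee i j ≤ x j := hex j
    omega
  by_cases hiA : i ∈ A
  · have hcompl : ∑ j ∈ Aᶜ, x j = 0 := by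
      refine Finset.sum_eq_zero (fun j hj => ?_)
      have hjA : j ∉ A := by simpa using hj
      have hji : j ≠ i := by rintro rfl; exact hjA hiA
      exact hx0 j hjA hji
    simp only [if_pos hiA] at hA'
    have hxw : ∑ j, w j ≤ ∑ j, x j := hxsum
    have hwA : ∑ j, w j = ∑ j ∈ A, w j := by
      rw [← Finset.sum_subset (Finset.subset_univ A) (fun j _ hj => hw0 j hj)]
    omega
  · have hcompl : ∑ j ∈ Aᶜ, x j ≤ 1 := by
      have : ∑ j ∈ Aᶜ, x j = ∑ j ∈ Aᶜ, (if j = i then x j else 0) := by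
        refine Finset.sum_congr rfl (fun j hj => ?_)
        by_cases h : j = i
        · simp [h]
        · simp [h, hx0 j (by simpa using hj) h]
      rw [this]
      rw [Finset.sum_eq_single i (fun j _ hj => if_neg hj)
        (fun h => absurd (Finset.mem_compl.mpr hiA) h)]
      simp only [if_pos rfl]
      exact hxi hiA
    simp only [if_neg hiA] at hA'
    have hwA : ∑ j, w j = ∑ j ∈ A, w j := by
      rw [← Finset.sum_subset (Finset.subset_univ A) (fun j _ hj => hw0 j hj)]
    omega

/-- if the rank strictly increases when adding `i`, contraction keeps the rank of `A` -/
lemma rk_contr_ge' (hP : IsDiscretePolymatroid P) {i : Fin n} {A : Finset (Fin n)}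
    (hiA : i ∉ A) (hlt : rk P A < rk P (insert i A)) :
    rk P A ≤ rk (contr P i) A := by
  obtain ⟨w, hw, hw0, hwsum⟩ := exists_rk hP A
  obtain ⟨y, hy, hy0, hysum⟩ := exists_rk hP (insert i A)
  obtain ⟨x, hx, hwx, hxle, hxsum⟩ := aug hP w hw y hy
  have hytot : ∑ j, y j = ∑ j ∈ insert i A, y j := by
    rw [← Finset.sum_subset (Finset.subset_univ _) (fun j _ hj => hy0 j hj)]
  have hx0 : ∀ j, j ∉ insert i A → x j = 0 := by
    intro j hj
    have := hxle j
    simp only [Pi.sup_apply] at this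
    have h2 := hw0 j (fun h => hj (Finset.mem_insert_of_mem h))
    have h3 := hy0 j hj
    omega
  have hxtot : ∑ j, x j = x i + ∑ j ∈ A, x j := by
    rw [← Finset.sum_subset (Finset.subset_univ _) (fun j _ hj => hx0 j hj),
      Finset.sum_insert hiA]
  have hxA : ∑ j ∈ A, x j ≤ rk P A := sum_le_rk hP hx A
  have hxi : 1 ≤ x i := by omega
  have hi : ee i ∈ P := by
    refine hP.2.2.1 x hx _ (fun j => ?_)
    unfold ee
    by_cases h : j = i
    · subst h; simp; omega
    · simp [h]
  have hmem : (fun j => x j - ee i j) ∈ contr P i := by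
    show (fun j => x j - ee i j) + ee i ∈ P
    have : (fun j => x j - ee i j) + ee i = x := by
      funext j
      show x j - ee i j + ee i j = x j
      have h2 : ee i j ≤ x j ∨ ee i j = 0 := by
        unfold ee
        by_cases h : j = i
        · subst h; left; simpa using hxi
        · right; simp [h]
      omega
    rwa [this]
  have hbound := sum_le_rk (contr_polymatroid hP hi) hmem A
  have hA' : ∑ j ∈ A, (x j - ee i j) = ∑ j ∈ A, x j := by
    refine Finset.sum_congr rfl (fun j hj => ?_)
    have hji : j ≠ i := fun h => hiA (h ▸ hj)
    unfold ee
    simp [hji]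
  have hwtot : ∑ j, w j = ∑ j ∈ A, w j := by
    rw [← Finset.sum_subset (Finset.subset_univ A) (fun j _ hj => hw0 j hj)]
  have hwxA : ∑ j ∈ A, w j ≤ ∑ j ∈ A, x j := Finset.sum_le_sum (fun j _ => hwx j)
  omega

end PolyNormal

namespace PolyNormal
open Finset
variable {n : ℕ}

lemma decomp_aux (N : ℕ) :
    ∀ (P1 P2 : Set (Fin n → ℕ)), IsDiscretePolymatroid P1 → IsDiscretePolymatroid P2 →
    ∀ x : Fin n → ℕ, ∑ i, x i ≤ N →
    (∀ A : Finset (Fin n), ∑ i ∈ A, x i ≤ rk P1 A + rk P2 A) →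
    ∃ y z, y ∈ P1 ∧ z ∈ P2 ∧ x = y + z := by
  induction N with
  | zero =>
    intro P1 P2 hP1 hP2 x hx _
    refine ⟨0, 0, zero_mem hP1, zero_mem hP2, ?_⟩
    funext i
    have : x i = 0 := by
      have := Finset.single_le_sum (f := x) (fun j _ => Nat.zero_le _) (Finset.mem_univ i)
      omega
    simp [this]
  | succ N IH =>
    intro P1 P2 hP1 hP2 x hxN hx
    by_cases hx0 : ∀ i, x i = 0
    · refine ⟨0, 0, zero_mem hP1, zero_mem hP2, ?_⟩
      funext i; simp [hx0 i]
    push_neg at hx0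
    obtain ⟨i, hi⟩ := hx0
    have hxi : 1 ≤ x i := by omega
    -- the "failure" predicate for absorbing e_i into the first polymatroid
    -- not both sides can fail
    have notboth : ¬ ((∃ A : Finset (Fin n), i ∉ A ∧ rk P1 (insert i A) = rk P1 A ∧
          rk P1 A + rk P2 A ≤ ∑ j ∈ A, x j) ∧
        (∃ B : Finset (Fin n), i ∉ B ∧ rk P2 (insert i B) = rk P2 B ∧
          rk P1 B + rk P2 B ≤ ∑ j ∈ B, x j)) := by
      rintro ⟨⟨A, hiA, hA1, hA2⟩, ⟨B, hiB, hB1, hB2⟩⟩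
      have hiC : i ∉ A ∪ B := by simp [hiA, hiB]
      have hins : insert i A ∪ (A ∪ B) = insert i (A ∪ B) := by
        ext j; simp only [Finset.mem_insert, Finset.mem_union]; tauto
      have hint : insert i A ∩ (A ∪ B) = A := by
        ext j
        simp only [Finset.mem_inter, Finset.mem_insert, Finset.mem_union]
        constructor
        · rintro ⟨h1 | h1, h2 | h2⟩ <;> first | assumption | (subst h1; tauto)
        · tauto
      have hins' : insert i B ∪ (A ∪ B) = insert i (A ∪ B) := by
        ext j; simp only [Finset.mem_insert, Finset.mem_union]; tauto
      have hint' : insert i B ∩ (A ∪ B) = B := by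
        ext j
        simp only [Finset.mem_inter, Finset.mem_insert, Finset.mem_union]
        constructor
        · rintro ⟨h1 | h1, h2 | h2⟩ <;> first | assumption | (subst h1; tauto)
        · tauto
      have s1 : rk P1 (insert i (A ∪ B)) ≤ rk P1 (A ∪ B) := by
        have := rk_submod hP1 (insert i A) (A ∪ B)
        rw [hins, hint, hA1] at this
        omega
      have s2 : rk P2 (insert i (A ∪ B)) ≤ rk P2 (A ∪ B) := by
        have := rk_submod hP2 (insert i B) (A ∪ B)
        rw [hins', hint', hB1] at this
        omega
      have h1 := hx (insert i (A ∪ B))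
      have h2 : ∑ j ∈ insert i (A ∪ B), x j = x i + ∑ j ∈ A ∪ B, x j :=
        Finset.sum_insert hiC
      have h3 : ∑ j ∈ A ∪ B, x j + ∑ j ∈ A ∩ B, x j = ∑ j ∈ A, x j + ∑ j ∈ B, x j :=
        Finset.sum_union_inter
      have h4 := hx (A ∩ B)
      have sub1 := rk_submod hP1 A B
      have sub2 := rk_submod hP2 A B
      omega
    -- a helper performing the step on the first polymatroid
    have step : ∀ (Q1 Q2 : Set (Fin n → ℕ)), IsDiscretePolymatroid Q1 →
        IsDiscretePolymatroid Q2 →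
        (∀ A : Finset (Fin n), ∑ j ∈ A, x j ≤ rk Q1 A + rk Q2 A) →
        ¬ (∃ A : Finset (Fin n), i ∉ A ∧ rk Q1 (insert i A) = rk Q1 A ∧
          rk Q1 A + rk Q2 A ≤ ∑ j ∈ A, x j) →
        ∃ y z, y ∈ Q1 ∧ z ∈ Q2 ∧ x = y + z := by
      intro Q1 Q2 hQ1 hQ2 hxQ hfail
      push_neg at hfail
      -- e_i ∈ Q1
      have hrk1 : 1 ≤ rk Q1 {i} := by
        have := hfail ∅ (by simp)
        have h0 : (insert i ∅ : Finset (Fin n)) = {i} := rfl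
        rw [h0] at this
        have he1 := rk_empty hQ1
        have he2 := rk_empty hQ2
        have hmono := rk_mono hQ1 (Finset.empty_subset {i})
        simp at this
        omega
      have hei : ee i ∈ Q1 := ee_mem hQ1 hrk1
      have hQ1' := contr_polymatroid hQ1 hei
      set x' : Fin n → ℕ := fun j => x j - ee i j with hx'def
      have hx'sum : ∑ j, x' j + 1 = ∑ j, x j := by
        have : ∑ j, x' j = ∑ j, (x j - ee i j) := rfl
        rw [this]
        have h2 : ∑ j, (x j - ee i j) + ∑ j, ee i j = ∑ j, x j := by
          rw [← Finset.sum_add_distrib]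
          refine Finset.sum_congr rfl (fun j _ => ?_)
          have : ee i j ≤ x j := by
            unfold ee
            by_cases h : j = i
            · subst h; simp; omega
            · simp [h]
          omega
        rw [sum_ee] at h2
        simp at h2
        omega
      have hx'A : ∀ A : Finset (Fin n), ∑ j ∈ A, x' j + (if i ∈ A then 1 else 0) = ∑ j ∈ A, x j := by
        intro A
        have : ∑ j ∈ A, x' j = ∑ j ∈ A, (x j - ee i j) := rfl
        rw [this, ← sum_ee i A, ← Finset.sum_add_distrib]
        refine Finset.sum_congr rfl (fun j _ => ?_)
        have : ee i j ≤ x j := by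
          unfold ee
          by_cases h : j = i
          · subst h; simp; omega
          · simp [h]
        omega
      have hyp' : ∀ A : Finset (Fin n), ∑ j ∈ A, x' j ≤ rk (contr Q1 i) A + rk Q2 A := by
        intro A
        have hA := hx'A A
        by_cases hiA : i ∈ A
        · rw [if_pos hiA] at hA
          have h1 := hxQ A
          have h2 := rk_contr_ge hQ1 hei A
          omega
        · rw [if_neg hiA] at hA
          have h1 := hxQ A
          have hmono := rk_mono hQ1 (Finset.subset_insert i A)
          by_cases hlt : rk Q1 A < rk Q1 (insert i A)
          · have h2 := rk_contr_ge' hQ1 hiA hlt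
            omega
          · have heq : rk Q1 (insert i A) = rk Q1 A := by omega
            have h3 := hfail A hiA heq
            have h2 := rk_contr_ge hQ1 hei A
            omega
      obtain ⟨y', z, hy', hz, hsplit⟩ := IH (contr Q1 i) Q2 hQ1' hQ2 x' (by omega) hyp'
      refine ⟨y' + ee i, z, hy', hz, ?_⟩
      funext j
      have h1 : x' j = y' j + z j := congrFun hsplit j
      have h2 : ee i j ≤ x j := by
        unfold ee
        by_cases h : j = i
        · subst h; simp; omega
        · simp [h]
      show x j = y' j + ee i j + z j
      have h3 : x' j = x j - ee i j := rfl
      omega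
    by_cases hfail : ∃ A : Finset (Fin n), i ∉ A ∧ rk P1 (insert i A) = rk P1 A ∧
        rk P1 A + rk P2 A ≤ ∑ j ∈ A, x j
    · -- then side 2 cannot fail
      have hfail2 : ¬ ∃ B : Finset (Fin n), i ∉ B ∧ rk P2 (insert i B) = rk P2 B ∧
          rk P2 B + rk P1 B ≤ ∑ j ∈ B, x j := by
        intro ⟨B, h1, h2, h3⟩
        exact notboth ⟨hfail, ⟨B, h1, h2, by omega⟩⟩
      obtain ⟨y, z, hy, hz, hsplit⟩ := step P2 P1 hP2 hP1 (fun A => by have := hx A; omega) hfail2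
      exact ⟨z, y, hz, hy, by rw [hsplit, add_comm]⟩
    · exact step P1 P2 hP1 hP2 hx hfail

/-- Edmonds-type decomposition for discrete polymatroids. -/
theorem decomp {P1 P2 : Set (Fin n → ℕ)} (hP1 : IsDiscretePolymatroid P1)
    (hP2 : IsDiscretePolymatroid P2) {x : Fin n → ℕ}
    (hx : ∀ A : Finset (Fin n), ∑ i ∈ A, x i ≤ rk P1 A + rk P2 A) :
    ∃ y z, y ∈ P1 ∧ z ∈ P2 ∧ x = y + z :=
  decomp_aux (∑ i, x i) P1 P2 hP1 hP2 x le_rfl hx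

end PolyNormal

namespace PolyNormal
open Finset
variable {n : ℕ} {P : Set (Fin n → ℕ)}

/-- Integer decomposition: a lattice point of the `k`-th dilate of the polymatroid
polytope is a sum of `k` elements of `P`. -/
theorem rep (hP : IsDiscretePolymatroid P) :
    ∀ (k : ℕ) (x : Fin n → ℕ), (∀ A : Finset (Fin n), ∑ i ∈ A, x i ≤ k * rk P A) →
    ∃ l : Multiset (Fin n → ℕ), (∀ u ∈ l, u ∈ P) ∧ Multiset.card l = k ∧ l.sum = x := by
  intro k
  induction k with
  | zero =>
    intro x hx
    refine ⟨0, by simp, by simp, ?_⟩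
    have := hx Finset.univ
    simp only [Nat.zero_mul, Nat.le_zero] at this
    rw [Multiset.sum_zero]
    funext i
    have h2 := Finset.single_le_sum (f := x) (fun j _ => Nat.zero_le _) (Finset.mem_univ i)
    have : x i = 0 := by omega
    simp [this]
  | succ k IH =>
    intro x hx
    set Q : Set (Fin n → ℕ) := Qset (fun A => k * rk P A) with hQdef
    have hQ : IsDiscretePolymatroid Q := by
      refine Qset_polymatroid (fun A B => ?_) (by simp [rk_empty hP])
      have := rk_submod hP A B
      calc k * rk P (A ∪ B) + k * rk P (A ∩ B) = k * (rk P (A ∪ B) + rk P (A ∩ B)) := by ring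
        _ ≤ k * (rk P A + rk P B) := Nat.mul_le_mul_left k this
        _ = k * rk P A + k * rk P B := by ring
    have hrkQ : ∀ A : Finset (Fin n), k * rk P A ≤ rk Q A := by
      intro A
      obtain ⟨u, hu, -, husum⟩ := exists_rk hP A
      have hmem : (fun j => k * u j) ∈ Q := by
        intro B
        have h1 : ∑ j ∈ B, k * u j = k * ∑ j ∈ B, u j := by
          rw [Finset.mul_sum]
        rw [h1]
        exact Nat.mul_le_mul_left k (sum_le_rk hP hu B)
      have := sum_le_rk hQ hmem A
      have h1 : ∑ j ∈ A, k * u j = k * ∑ j ∈ A, u j := by rw [Finset.mul_sum]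
      rw [h1, husum] at this
      exact this
    obtain ⟨y, z, hy, hz, hsplit⟩ := decomp hP hQ (x := x) (fun A => by
      have h1 := hx A
      have h2 := hrkQ A
      have : (k+1) * rk P A = rk P A + k * rk P A := by ring
      omega)
    obtain ⟨l, hl, hlcard, hlsum⟩ := IH z hz
    refine ⟨y ::ₘ l, ?_, by simp [hlcard], by rw [Multiset.sum_cons, hlsum, hsplit]⟩
    intro u hu
    rcases Multiset.mem_cons.mp hu with h | h
    · exact h ▸ hy
    · exact hl u h

end PolyNormal

namespace PolyNormal
open MvPolynomial AddMonoidAlgebra Pointwise Finset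

variable {K : Type*} [Field K] {n : ℕ} {P : Set (Fin n → ℕ)}

/-- the saturated monoid of exponents -/
def Mset (P : Set (Fin n → ℕ)) : Set (Fin (n+1) →₀ ℕ) :=
  {d | ∀ A : Finset (Fin n), ∑ i ∈ A, d i.castSucc ≤ d (Fin.last n) * rk P A}

lemma Mset_zero : (0 : Fin (n+1) →₀ ℕ) ∈ Mset P := by
  intro A; simp

lemma Mset_add {d e : Fin (n+1) →₀ ℕ} (hd : d ∈ Mset P) (he : e ∈ Mset P) :
    d + e ∈ Mset P := by
  intro A
  have h1 := hd A
  have h2 := he A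
  simp only [Finsupp.add_apply, Finset.sum_add_distrib, Nat.add_mul]
  omega

/-- the exponent of the generator attached to `u ∈ P` -/
noncomputable def Dex (u : Fin n → ℕ) : Fin (n+1) →₀ ℕ :=
  (∑ i : Fin n, Finsupp.single (i.castSucc) (u i)) + Finsupp.single (Fin.last n) 1

lemma Dex_castSucc (u : Fin n → ℕ) (j : Fin n) : Dex u j.castSucc = u j := by
  unfold Dex
  rw [Finsupp.add_apply, Finsupp.finset_sum_apply]
  have h1 : (Finsupp.single (Fin.last n) 1) j.castSucc = 0 :=
    Finsupp.single_eq_of_ne' (fun h => (Fin.castSucc_lt_last j).ne' h)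
  have h2 : ∑ i : Fin n, (Finsupp.single (i.castSucc) (u i)) j.castSucc = u j := by
    rw [Finset.sum_eq_single j (fun i _ hij => Finsupp.single_eq_of_ne'
      (fun h => hij (Fin.castSucc_injective n h))) (fun h => absurd (Finset.mem_univ j) h)]
    simp
  omega

lemma Dex_last (u : Fin n → ℕ) : Dex u (Fin.last n) = 1 := by
  unfold Dex
  rw [Finsupp.add_apply, Finsupp.finset_sum_apply]
  have h1 : (Finsupp.single (Fin.last n) (1:ℕ)) (Fin.last n) = 1 := Finsupp.single_eq_same
  have h2 : ∑ i : Fin n, (Finsupp.single (i.castSucc) (u i)) (Fin.last n) = 0 :=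
    Finset.sum_eq_zero (fun i _ => Finsupp.single_eq_of_ne' (Fin.castSucc_lt_last i).ne)
  omega

lemma Dex_mem (hP : IsDiscretePolymatroid P) {u : Fin n → ℕ} (hu : u ∈ P) :
    Dex u ∈ Mset P := by
  intro A
  rw [Dex_last]
  simp only [Dex_castSucc, one_mul]
  exact sum_le_rk hP hu A

lemma prod_monomial_one {ι : Type*} (s : Finset ι) (g : ι → (Fin (n+1) →₀ ℕ)) :
    ∏ i ∈ s, monomial (g i) (1:K) = monomial (∑ i ∈ s, g i) (1:K) := by
  classical
  induction s using Finset.induction_on with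
  | empty => simp [MvPolynomial.C_apply.symm]
  | insert _ _ hi ih =>
    rw [Finset.prod_insert hi, Finset.sum_insert hi, ih, MvPolynomial.monomial_mul, one_mul]

lemma gen_eq (u : Fin n → ℕ) :
    (∏ i : Fin n, X (i.castSucc) ^ u i) * X (Fin.last n) = monomial (Dex u) (1:K) := by
  have h1 : ∀ i : Fin n, (X (i.castSucc) ^ u i : MvPolynomial (Fin (n+1)) K)
      = monomial (Finsupp.single (i.castSucc) (u i)) 1 := fun i => X_pow_eq_monomial
  have h2 : (X (Fin.last n) : MvPolynomial (Fin (n+1)) K)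
      = monomial (Finsupp.single (Fin.last n) 1) 1 := by
    rw [← pow_one (X (Fin.last n) : MvPolynomial (Fin (n+1)) K), X_pow_eq_monomial]
  rw [h2, Finset.prod_congr rfl (fun i _ => h1 i), prod_monomial_one,
    MvPolynomial.monomial_mul, one_mul]
  rfl

end PolyNormal

/-- The homogeneous semigroup ring `K[P] = K[t^u s : u ∈ P]`, realised as the
`K`-subalgebra of the polynomial ring `K[t_1,…,t_n,s]`
(`= MvPolynomial (Fin (n+1)) K`, with `t_i = X i.castSucc` and
`s = X (Fin.last n)`) generated by the monomials `t^u s`, `u ∈ P`. -/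
noncomputable def polymatroidRing (K : Type*) [Field K] {n : ℕ}
    (P : Set (Fin n → ℕ)) : Subalgebra K (MvPolynomial (Fin (n + 1)) K) :=
  Algebra.adjoin K
    {f | ∃ u ∈ P, f = (∏ i : Fin n, MvPolynomial.X i.castSucc ^ u i) *
      MvPolynomial.X (Fin.last n)}

namespace PolyNormal
open MvPolynomial AddMonoidAlgebra Pointwise Finset

variable {K : Type*} [Field K] {n : ℕ} {P : Set (Fin n → ℕ)}

/-- the subalgebra of polynomials all whose exponents lie in `Mset P` -/
noncomputable def Asub (K : Type*) [Field K] (P : Set (Fin n → ℕ)) :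
    Subalgebra K (MvPolynomial (Fin (n+1)) K) where
  carrier := {f | ∀ d ∈ f.support, d ∈ Mset P}
  zero_mem' := by simp
  one_mem' := by
    intro d hd
    rw [MvPolynomial.mem_support_iff, MvPolynomial.coeff_one] at hd
    have : d = 0 := by by_contra h; exact hd (if_neg (fun he => h he.symm))
    exact this ▸ Mset_zero
  add_mem' := by
    intro f g hf hg d hd
    have := MvPolynomial.support_add (p := f) (q := g) hd
    rcases Finset.mem_union.mp this with h | h
    · exact hf d h
    · exact hg d h
  mul_mem' := by
    intro f g hf hg d hd
    have := MvPolynomial.support_mul f g hd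
    rw [Finset.mem_add] at this
    obtain ⟨a, ha, b, hb, rfl⟩ := this
    exact Mset_add (hf a ha) (hg b hb)
  algebraMap_mem' := by
    intro r d hd
    rw [MvPolynomial.algebraMap_eq, MvPolynomial.mem_support_iff, MvPolynomial.coeff_C] at hd
    have : d = 0 := by by_contra h; exact hd (if_neg (fun he => h he.symm))
    exact this ▸ Mset_zero

lemma mem_Asub {f : MvPolynomial (Fin (n+1)) K} :
    f ∈ Asub K P ↔ ∀ d ∈ f.support, d ∈ Mset P := Iff.rfl

lemma ring_le_Asub (hP : IsDiscretePolymatroid P) : polymatroidRing K P ≤ Asub K P := by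
  classical
  refine Algebra.adjoin_le ?_
  rintro f ⟨u, hu, rfl⟩
  rw [SetLike.mem_coe, mem_Asub]
  intro d hd
  rw [gen_eq, MvPolynomial.support_monomial, if_neg (one_ne_zero)] at hd
  rw [Finset.mem_singleton] at hd
  exact hd ▸ Dex_mem hP hu

lemma gen_mem (u : Fin n → ℕ) (hu : u ∈ P) :
    monomial (Dex u) (1:K) ∈ polymatroidRing K P := by
  rw [← gen_eq]
  exact Algebra.subset_adjoin ⟨u, hu, rfl⟩

lemma multiset_gen_mem (l : Multiset (Fin n → ℕ)) (hl : ∀ u ∈ l, u ∈ P) :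
    monomial ((l.map Dex).sum) (1:K) ∈ polymatroidRing K P := by
  induction l using Multiset.induction_on with
  | empty =>
    simp only [Multiset.map_zero, Multiset.sum_zero]
    rw [← MvPolynomial.C_apply, map_one]
    exact one_mem _
  | cons u l ih =>
    rw [Multiset.map_cons, Multiset.sum_cons, ← one_mul (1:K), ← MvPolynomial.monomial_mul]
    exact mul_mem (gen_mem u (hl u (Multiset.mem_cons_self u l)))
      (ih (fun v hv => hl v (Multiset.mem_cons_of_mem hv)))

lemma multiset_sum_apply_pi (l : Multiset (Fin n → ℕ)) (i : Fin n) :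
    l.sum i = (l.map (fun u => u i)).sum := by
  induction l using Multiset.induction_on with
  | empty => simp
  | cons u l ih => simp [ih]

lemma multiset_sum_apply_fs (l : Multiset (Fin (n+1) →₀ ℕ)) (j : Fin (n+1)) :
    l.sum j = (l.map (fun d => d j)).sum := by
  induction l using Multiset.induction_on with
  | empty => simp
  | cons u l ih => simp [ih]

lemma monomial_mem (hP : IsDiscretePolymatroid P) (d : Fin (n+1) →₀ ℕ) (hd : d ∈ Mset P)
    (c : K) : monomial d c ∈ polymatroidRing K P := by
  obtain ⟨l, hl, hcard, hsum⟩ := rep hP (d (Fin.last n)) (fun i => d i.castSucc) hd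
  have hexp : (l.map Dex).sum = d := by
    ext j
    rw [multiset_sum_apply_fs]
    induction j using Fin.lastCases with
    | last =>
      have : (l.map Dex).map (fun e => e (Fin.last n)) = l.map (fun _ => 1) := by
        rw [Multiset.map_map]
        exact Multiset.map_congr rfl (fun u _ => Dex_last u)
      rw [this]
      simp [hcard]
    | cast i =>
      have : (l.map Dex).map (fun e => e i.castSucc) = l.map (fun u => u i) := by
        rw [Multiset.map_map]
        exact Multiset.map_congr rfl (fun u _ => Dex_castSucc u i)
      rw [this, ← multiset_sum_apply_pi, hsum]
  have h1 : monomial d c = MvPolynomial.C c * monomial d 1 := by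
    rw [MvPolynomial.C_mul_monomial, mul_one]
  rw [h1, ← hexp]
  exact mul_mem ((polymatroidRing K P).algebraMap_mem c) (multiset_gen_mem l hl)

lemma Asub_le_ring (hP : IsDiscretePolymatroid P) : Asub K P ≤ polymatroidRing K P := by
  intro f hf
  rw [← MvPolynomial.support_sum_monomial_coeff f]
  exact sum_mem (fun d hd => monomial_mem hP d (hf d hd) _)

lemma mem_ring_iff (hP : IsDiscretePolymatroid P) {f : MvPolynomial (Fin (n+1)) K} :
    f ∈ polymatroidRing K P ↔ ∀ d ∈ f.support, d ∈ Mset P :=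
  ⟨fun h => ring_le_Asub hP h, fun h => Asub_le_ring hP h⟩

end PolyNormal

namespace PolyNormal
open MvPolynomial AddMonoidAlgebra Pointwise Finset

variable {K : Type*} [Field K] {n : ℕ} {P : Set (Fin n → ℕ)}

/-- saturation of `Mset` -/
lemma Mset_sat {c a : Fin (n+1) →₀ ℕ} (h : ∀ j : ℕ, c + j • a ∈ Mset P) :
    a ∈ Mset P := by
  intro A
  set j : ℕ := c (Fin.last n) * rk P A + 1 with hj
  have hA0 := h j A
  have happ : ∀ x : Fin (n+1), (c + j • a) x = c x + j * a x := by
    intro x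
    rw [Finsupp.add_apply, Finsupp.smul_apply, smul_eq_mul]
  have hA : (∑ i ∈ A, c i.castSucc) + j * (∑ i ∈ A, a i.castSucc) ≤
      c (Fin.last n) * rk P A + j * (a (Fin.last n) * rk P A) := by
    have h1 : ∑ i ∈ A, (c + j • a) i.castSucc
        = (∑ i ∈ A, c i.castSucc) + j * (∑ i ∈ A, a i.castSucc) := by
      rw [Finset.sum_congr rfl (fun i _ => happ i.castSucc), Finset.sum_add_distrib,
        Finset.mul_sum]
    have h2 : (c + j • a) (Fin.last n) * rk P A
        = c (Fin.last n) * rk P A + j * (a (Fin.last n) * rk P A) := by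
      rw [happ]; ring
    rw [h1, h2] at hA0
    exact hA0
  by_contra hcon
  push_neg at hcon
  have hstep : j * (a (Fin.last n) * rk P A) + j ≤ j * ∑ i ∈ A, a i.castSucc := by
    calc j * (a (Fin.last n) * rk P A) + j = j * (a (Fin.last n) * rk P A + 1) := by ring
      _ ≤ j * ∑ i ∈ A, a i.castSucc := Nat.mul_le_mul_left j hcon
  omega

/-- the lexicographic leading exponent -/
noncomputable def ld (f : MvPolynomial (Fin (n+1)) K) : Fin (n+1) →₀ ℕ :=
  ofLex (AddMonoidAlgebra.supDegree toLex f)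

lemma ld_mem_support {f : MvPolynomial (Fin (n+1)) K} (hf : f ≠ 0) : ld f ∈ f.support := by
  obtain ⟨a, ha, he⟩ := AddMonoidAlgebra.exists_supDegree_mem_support toLex hf
  unfold ld
  rw [he]; exact ha

lemma ld_mul {f g : MvPolynomial (Fin (n+1)) K} (hf : f ≠ 0) (hg : g ≠ 0) :
    ld (f * g) = ld f + ld g := by
  unfold ld
  rw [AddMonoidAlgebra.supDegree_mul toLex.injective (fun _ _ => toLex_add _ _)
    (mul_ne_zero ((AddMonoidAlgebra.leadingCoeff_ne_zero toLex.injective).mpr hf)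
      ((AddMonoidAlgebra.leadingCoeff_ne_zero toLex.injective).mpr hg)) hf hg]
  rfl

lemma ld_mul_pow {f g : MvPolynomial (Fin (n+1)) K} (hf : f ≠ 0) (hg : g ≠ 0) (j : ℕ) :
    ld (f * g ^ j) = ld f + j • ld g := by
  induction j with
  | zero => simp
  | succ j ih =>
    have hgj : g ^ j ≠ 0 := pow_ne_zero j hg
    have h1 : f * g ^ (j+1) = (f * g ^ j) * g := by ring
    rw [h1, ld_mul (mul_ne_zero hf hgj) hg, ih, succ_nsmul, add_assoc]

end PolyNormal

namespace PolyNormal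
open MvPolynomial AddMonoidAlgebra Pointwise Finset

variable {K : Type*} [Field K] {n : ℕ} {P : Set (Fin n → ℕ)}

lemma key (hP : IsDiscretePolymatroid P) :
    ∀ (N : ℕ) (f : MvPolynomial (Fin (n+1)) K), f.support.card ≤ N →
    IsIntegral ↥(polymatroidRing K P) f →
    (∃ q : MvPolynomial (Fin (n+1)) K, q ∈ polymatroidRing K P ∧ q ≠ 0 ∧
       q * f ∈ polymatroidRing K P) →
    f ∈ polymatroidRing K P := by
  intro N
  induction N with
  | zero =>
    intro f hcard _ _
    have h0 : f.support = ∅ := Finset.card_eq_zero.mp (by omega)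
    have : f = 0 := by
      ext d
      have : d ∉ f.support := by simp [h0]
      rw [MvPolynomial.notMem_support_iff] at this
      simp [this]
    exact this ▸ Subalgebra.zero_mem _
  | succ N IH =>
    intro f hcard hint hq
    by_cases hf0 : f = 0
    · exact hf0 ▸ Subalgebra.zero_mem _
    obtain ⟨q, hqmem, hq0, hqf⟩ := hq
    obtain ⟨π, hmonic, heval⟩ := hint
    set m := π.natDegree with hm
    have hm1 : 1 ≤ m := by
      rcases Nat.eq_zero_or_pos m with h | h
      · exfalso
        have h1 : π = 1 := hmonic.natDegree_eq_zero.mp h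
        rw [h1, Polynomial.eval₂_one] at heval
        exact one_ne_zero heval
      · exact h
    have hexp : (0 : MvPolynomial (Fin (n+1)) K) =
        (∑ i ∈ Finset.range m,
          algebraMap ↥(polymatroidRing K P) _ (π.coeff i) * f ^ i) + f ^ m := by
      rw [← heval, Polynomial.eval₂_eq_sum_range, ← hm, Finset.sum_range_succ,
        hmonic.coeff_natDegree, map_one, one_mul]
    have hfm : f ^ m = - ∑ i ∈ Finset.range m,
        algebraMap ↥(polymatroidRing K P) _ (π.coeff i) * f ^ i :=
      eq_neg_of_add_eq_zero_right hexp.symm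
    -- every q^(m-1) * f^j lies in the ring
    have claim : ∀ j, q ^ (m-1) * f ^ j ∈ polymatroidRing K P := by
      intro j
      induction j using Nat.strong_induction_on with
      | _ j IHj =>
        by_cases hjm : j ≤ m - 1
        · have hsplit : q ^ (m-1) * f ^ j = q^(m-1-j) * (q*f)^j := by
            rw [mul_pow, ← mul_assoc, ← pow_add]
            congr 2
            omega
          rw [hsplit]
          exact mul_mem (pow_mem hqmem _) (pow_mem hqf _)
        · push_neg at hjm
          have hsplit : q ^ (m-1) * f ^ j = (q^(m-1) * f^(j-m)) * f^m := by
            rw [mul_assoc, ← pow_add]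
            congr 2
            omega
          rw [hsplit, hfm, mul_neg]
          refine neg_mem ?_
          rw [Finset.mul_sum]
          refine sum_mem (fun i hi => ?_)
          have hi' : i < m := Finset.mem_range.mp hi
          have hre : q^(m-1) * f^(j-m) * (algebraMap ↥(polymatroidRing K P) _ (π.coeff i) * f^i)
              = algebraMap ↥(polymatroidRing K P) _ (π.coeff i) * (q^(m-1) * f^(j-m+i)) := by
            rw [pow_add]
            ring
          rw [hre]
          exact mul_mem ((π.coeff i).2) (IHj (j-m+i) (by omega))
    -- the leading exponent of f lies in Mset
    have hQ0 : q ^ (m-1) ≠ 0 := pow_ne_zero _ hq0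
    have hld : ∀ j : ℕ, ld (q^(m-1)) + j • ld f ∈ Mset P := by
      intro j
      have hne : q^(m-1) * f^j ≠ 0 := mul_ne_zero hQ0 (pow_ne_zero _ hf0)
      have hmem := (mem_ring_iff hP).mp (claim j) (ld (q^(m-1) * f^j)) (ld_mem_support hne)
      rwa [ld_mul_pow hQ0 hf0 j] at hmem
    have hν : ld f ∈ Mset P := Mset_sat hld
    -- subtract off the leading term and use induction
    set t : MvPolynomial (Fin (n+1)) K := monomial (ld f) (coeff (ld f) f) with ht
    have htmem : t ∈ polymatroidRing K P := monomial_mem hP _ hν _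
    have hsupp : (f - t).support = f.support.erase (ld f) := by
      classical
      ext d
      rw [MvPolynomial.mem_support_iff, Finset.mem_erase, MvPolynomial.mem_support_iff,
        MvPolynomial.coeff_sub, ht, MvPolynomial.coeff_monomial]
      by_cases hd : d = ld f
      · subst hd
        simp
      · rw [if_neg (fun h => hd h.symm)]
        simp [hd]
    have hcard' : (f - t).support.card ≤ N := by
      rw [hsupp]
      have h1 := Finset.card_erase_of_mem (ld_mem_support hf0)
      omega
    have hint' : IsIntegral ↥(polymatroidRing K P) (f - t) := by
      refine IsIntegral.sub ⟨π, hmonic, heval⟩ ?_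
      have heq : t = algebraMap ↥(polymatroidRing K P) _ (⟨t, htmem⟩ : ↥(polymatroidRing K P)) :=
        rfl
      rw [heq]
      exact isIntegral_algebraMap
    have hmem' : f - t ∈ polymatroidRing K P := by
      refine IH (f - t) hcard' hint' ⟨q, hqmem, hq0, ?_⟩
      rw [mul_sub]
      exact sub_mem hqf (mul_mem hqmem htmem)
    have : f = (f - t) + t := by ring
    rw [this]
    exact add_mem hmem' htmem

end PolyNormal

open PolyNormal in
set_option synthInstance.maxHeartbeats 1000000 in
set_option maxHeartbeats 1000000 in
/-- Theorem 6.1: for a discrete polymatroid `P ⊆ ℤ_+^n`, the homogeneous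
semigroup ring `K[P]` is a normal domain, i.e. an integral domain that is
integrally closed in its field of fractions. -/
theorem polymatroidRing_normal (K : Type*) [Field K] {n : ℕ}
    (P : Set (Fin n → ℕ)) (hP : IsDiscretePolymatroid P) :
    IsDomain (polymatroidRing K P) ∧ IsIntegrallyClosed (polymatroidRing K P) := by
  constructor
  · infer_instance
  · letI B := MvPolynomial (Fin (n+1)) K
    letI F := FractionRing B
    haveI : IsIntegrallyClosed B := UniqueFactorizationMonoid.instIsIntegrallyClosed
    set A := polymatroidRing K P with hA
    set χ : ↥A →+* F := algebraMap ↥A F with hχ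
    have hχdef : ∀ a : ↥A, χ a = algebraMap B F (a : B) := by
      intro a
      rw [hχ, IsScalarTower.algebraMap_apply ↥A B F]
      rfl
    have hχinj : Function.Injective χ := by
      intro a b hab
      rw [hχdef, hχdef] at hab
      exact Subtype.ext (IsFractionRing.injective B F hab)
    have hunits : ∀ y : nonZeroDivisors ↥A, IsUnit (χ y) := by
      intro y
      have hy0 : (y : ↥A) ≠ 0 := nonZeroDivisors.ne_zero y.2
      have : χ y ≠ 0 := fun h => hy0 (hχinj (by rw [h, map_zero]))
      exact isUnit_iff_ne_zero.mpr this
    set ψ : FractionRing ↥A →+* F := IsLocalization.lift hunits with hψ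
    have hψcomm : ∀ a : ↥A, ψ (algebraMap ↥A (FractionRing ↥A) a) = χ a := fun a =>
      IsLocalization.lift_eq hunits a
    have hψinj : Function.Injective ψ := RingHom.injective ψ
    rw [isIntegrallyClosed_iff (FractionRing ↥A)]
    intro x hx
    letI ψalg : FractionRing ↥A →ₐ[↥A] F :=
      { toRingHom := ψ, commutes' := fun a => hψcomm a }
    have hξ : IsIntegral ↥A (ψ x) := IsIntegral.map ψalg hx
    have hξB : IsIntegral B (ψ x) := IsIntegral.tower_top hξ
    obtain ⟨f, hf⟩ := IsIntegrallyClosed.isIntegral_iff.mp hξB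
    -- f is integral over A
    have hfint : IsIntegral ↥A f := by
      have hιinj : Function.Injective (IsScalarTower.toAlgHom ↥A B F) :=
        IsFractionRing.injective B F
      rw [← isIntegral_algHom_iff (IsScalarTower.toAlgHom ↥A B F) hιinj]
      show IsIntegral ↥A (algebraMap B F f)
      rw [hf]
      exact hξ
    -- f satisfies a fractional relation over A
    obtain ⟨⟨a, s⟩, hsurj⟩ := IsLocalization.surj (nonZeroDivisors ↥A) x
    have hfs : ((s : ↥A) : B) * f = ((a : ↥A) : B) := by
      apply IsFractionRing.injective B F
      rw [map_mul, hf]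
      have h1 := congrArg ψ hsurj
      rw [map_mul, hψcomm, hψcomm] at h1
      rw [hχdef, hχdef] at h1
      calc algebraMap B F ((s : ↥A) : B) * ψ x = ψ x * algebraMap B F ((s : ↥A) : B) := by ring
        _ = algebraMap B F ((a : ↥A) : B) := h1
    have hfA : f ∈ polymatroidRing K P := by
      refine key hP f.support.card f le_rfl hfint ⟨((s : ↥A) : B), ?_, ?_, ?_⟩
      · exact (s : ↥A).2
      · intro h0
        have : (s : ↥A) = 0 := Subtype.ext h0
        exact nonZeroDivisors.ne_zero s.2 this
      · rw [hfs]; exact (a : ↥A).2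
    refine ⟨⟨f, hfA⟩, ?_⟩
    apply hψinj
    rw [hψcomm, hχdef]
    show algebraMap B F f = ψ x
    exact hf
end

section
/- Let n ≥ 3, let α = (α_1,…,α_{n−1}) ∈ ℤ_+^{n−1} with α_i > 1 for all i, and let d be an integer with d > α_1 + ⋯ + α_{n−1} + 1. Define ρ : 2^[n] → ℤ by ρ(∅) = 0, ρ([n]) = d, ρ(A) = Σ_{i∈A} α_i + 1 for every nonempty A ⊆ [n−1], and ρ(A) = d − Σ_{i∈[n]∖A} α_i + 1 for every A with n ∈ A and A ≠ [n]. Then ρ is strictly increasing (A ⊊ B implies ρ(A) < ρ(B)) and submodular (ρ(A) + ρ(B) ≥ ρ(A ∪ B) + ρ(A ∩ B) for all A, B ⊆ [n]). -/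
/-- Theorem 7.6(b)(i): let `n = m + 1 ≥ 3`, let `α = (α_1,…,α_{n−1})` with
every `α_i > 1`, and let `d > α_1 + ⋯ + α_{n−1} + 1`.  Define
`ρ : 2^[n] → ℤ` by `ρ(∅) = 0`, `ρ([n]) = d`, `ρ(A) = Σ_{i∈A} α_i + 1` for
every nonempty `A ⊆ [n−1]`, and `ρ(A) = d − Σ_{i∈[n]∖A} α_i + 1` whenever
`n ∈ A` and `A ≠ [n]`.  Then `ρ` is strictly increasing and submodular.
Here `[n]` is modeled as `Fin (m+1)`, whose last element `Fin.last m` plays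
the role of `n`, and `[n−1]` as the image of `Fin.castSucc`. -/
theorem generic_rank_function_strictMono_and_submodular {m : ℕ} (hm : 2 ≤ m)
    (α : Fin m → ℤ) (hα : ∀ i, 1 < α i)
    (d : ℤ) (hd : (∑ i, α i) + 1 < d)
    (ρ : Finset (Fin (m + 1)) → ℤ)
    (hempty : ρ ∅ = 0) (huniv : ρ Finset.univ = d)
    (hsmall : ∀ A : Finset (Fin (m + 1)), A.Nonempty → Fin.last m ∉ A →
      ρ A = (∑ i : Fin m, if i.castSucc ∈ A then α i else 0) + 1)
    (hbig : ∀ A : Finset (Fin (m + 1)), Fin.last m ∈ A → A ≠ Finset.univ →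
      ρ A = d - (∑ i : Fin m, if i.castSucc ∉ A then α i else 0) + 1) :
    (∀ A B : Finset (Fin (m + 1)), A ⊂ B → ρ A < ρ B) ∧
    (∀ A B : Finset (Fin (m + 1)), ρ (A ∪ B) + ρ (A ∩ B) ≤ ρ A + ρ B) := by
  set T : ℤ := ∑ i, α i with hT
  set f : Finset (Fin (m + 1)) → ℤ :=
    fun A => ∑ i : Fin m, if i.castSucc ∈ A then α i else 0 with hf
  have hfempty : f ∅ = 0 := by simp [hf]
  have hfuniv : f Finset.univ = T := by simp [hf, hT]
  have hfmod : ∀ A B, f (A ∪ B) + f (A ∩ B) = f A + f B := by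
    intro A B
    simp only [hf, ← Finset.sum_add_distrib]
    refine Finset.sum_congr rfl fun i _ => ?_
    by_cases hA : i.castSucc ∈ A <;> by_cases hB : i.castSucc ∈ B <;>
      simp [Finset.mem_union, Finset.mem_inter, hA, hB]
  have hfmono : ∀ A B : Finset (Fin (m + 1)), A ⊆ B → f A ≤ f B := by
    intro A B hAB
    refine Finset.sum_le_sum fun i _ => ?_
    by_cases h : i.castSucc ∈ A
    · simp [h, hAB h]
    · have := (hα i).le
      split_ifs <;> omega
  have hfnonneg : ∀ A, 0 ≤ f A := by
    intro A
    refine Finset.sum_nonneg fun i _ => ?_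
    have := (hα i).le; split_ifs <;> omega
  have hfT : ∀ A, f A ≤ T := fun A =>
    hfuniv ▸ hfmono A Finset.univ (Finset.subset_univ A)
  have hT0 : 0 ≤ T := hfuniv ▸ hfnonneg Finset.univ
  have hfstep : ∀ (A B : Finset (Fin (m + 1))) (x : Fin (m + 1)), A ⊆ B → x ∈ B → x ∉ A →
      x ≠ Fin.last m → f A + 2 ≤ f B := by
    intro A B x hAB hxB hxA hxl
    obtain ⟨j, rfl⟩ := Fin.exists_castSucc_eq.mpr hxl
    have key : f B - f A = ∑ i : Fin m,
        ((if i.castSucc ∈ B then α i else 0) - (if i.castSucc ∈ A then α i else 0)) := by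
      rw [Finset.sum_sub_distrib]
    have hterm : ∀ i ∈ (Finset.univ : Finset (Fin m)),
        (0 : ℤ) ≤ (if i.castSucc ∈ B then α i else 0) - (if i.castSucc ∈ A then α i else 0) := by
      intro i _
      have := (hα i).le
      by_cases h : i.castSucc ∈ A
      · simp [h, hAB h]
      · split_ifs <;> omega
    have hj := Finset.single_le_sum hterm (Finset.mem_univ j)
    rw [if_pos hxB, if_neg hxA] at hj
    have := hα j
    linarith [key ▸ hj]
  have hcompl : ∀ A : Finset (Fin (m + 1)),
      (∑ i : Fin m, if i.castSucc ∉ A then α i else 0) = T - f A := by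
    intro A
    have : (∑ i : Fin m, if i.castSucc ∉ A then α i else 0) + f A = T := by
      simp only [hf, hT, ← Finset.sum_add_distrib]
      refine Finset.sum_congr rfl fun i _ => ?_
      by_cases h : i.castSucc ∈ A <;> simp [h]
    linarith
  have hρb : ∀ A, Fin.last m ∈ A → A ≠ Finset.univ → ρ A = f A + (d - T + 1) := by
    intro A h1 h2
    rw [hbig A h1 h2, hcompl]
    ring
  have hρs : ∀ A : Finset (Fin (m + 1)), A.Nonempty → Fin.last m ∉ A → ρ A = f A + 1 := by
    intro A h1 h2
    rw [hsmall A h1 h2]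
  have hub : ∀ X, Fin.last m ∉ X → ρ X ≤ f X + 1 := by
    intro X hX
    rcases X.eq_empty_or_nonempty with rfl | hne
    · rw [hempty, hfempty]; norm_num
    · exact (hρs X hne hX).le
  have hub' : ∀ X, Fin.last m ∈ X → ρ X ≤ f X + (d - T + 1) := by
    intro X hX
    by_cases hXu : X = Finset.univ
    · subst hXu
      rw [huniv, hfuniv]
      linarith
    · exact (hρb X hX hXu).le
  constructor
  · -- strict monotonicity
    intro A B hAB
    obtain ⟨x, hxB, hxA⟩ := Finset.exists_of_ssubset hAB
    have hsub : A ⊆ B := hAB.subset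
    by_cases hlB : Fin.last m ∈ B
    · by_cases hBu : B = Finset.univ
      · subst hBu
        by_cases hlA : Fin.last m ∈ A
        · have hAne : A ≠ Finset.univ := hAB.ne
          have hxl : x ≠ Fin.last m := fun h => hxA (h ▸ hlA)
          have := hfstep A Finset.univ x (Finset.subset_univ A) (Finset.mem_univ x) hxA hxl
          rw [hfuniv] at this
          rw [hρb A hlA hAne, huniv]
          linarith
        · rcases A.eq_empty_or_nonempty with rfl | hne
          · rw [hempty, huniv]; linarith
          · rw [hρs A hne hlA, huniv]
            linarith [hfT A]
      · by_cases hlA : Fin.last m ∈ A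
        · have hAne : A ≠ Finset.univ := by
            rintro rfl
            exact hBu (Finset.univ_subset_iff.mp hsub)
          have hxl : x ≠ Fin.last m := fun h => hxA (h ▸ hlA)
          have := hfstep A B x hsub hxB hxA hxl
          rw [hρb A hlA hAne, hρb B hlB hBu]
          linarith
        · rcases A.eq_empty_or_nonempty with rfl | hne
          · rw [hempty, hρb B hlB hBu]
            linarith [hfnonneg B]
          · rw [hρs A hne hlA, hρb B hlB hBu]
            linarith [hfmono A B hsub]
    · have hlA : Fin.last m ∉ A := fun h => hlB (hsub h)
      have hBu : B ≠ Finset.univ := fun h => hlB (h ▸ Finset.mem_univ _)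
      have hBne : B.Nonempty := ⟨x, hxB⟩
      have hxl : x ≠ Fin.last m := fun h => hlB (h ▸ hxB)
      rcases A.eq_empty_or_nonempty with rfl | hne
      · rw [hempty, hρs B hBne hlB]
        linarith [hfnonneg B]
      · have := hfstep A B x hsub hxB hxA hxl
        rw [hρs A hne hlA, hρs B hBne hlB]
        linarith
  · -- submodularity
    intro A B
    by_cases hAB : A ⊆ B
    · rw [Finset.union_eq_right.mpr hAB, Finset.inter_eq_left.mpr hAB]
      linarith
    by_cases hBA : B ⊆ A
    · rw [Finset.union_eq_left.mpr hBA, Finset.inter_eq_right.mpr hBA]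
    obtain ⟨a, haA, haB⟩ := Finset.not_subset.mp hAB
    obtain ⟨b, hbB, hbA⟩ := Finset.not_subset.mp hBA
    have hAne : A.Nonempty := ⟨a, haA⟩
    have hBne : B.Nonempty := ⟨b, hbB⟩
    have hAu : A ≠ Finset.univ := fun h => hbA (h ▸ Finset.mem_univ b)
    have hBu : B ≠ Finset.univ := fun h => haB (h ▸ Finset.mem_univ a)
    have hmod := hfmod A B
    by_cases hA : Fin.last m ∈ A <;> by_cases hB : Fin.last m ∈ B
    · -- both big
      have hIu : A ∩ B ≠ Finset.univ := by
        intro h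
        have hs : Finset.univ ⊆ A := h ▸ Finset.inter_subset_left
        exact hAu (Finset.univ_subset_iff.mp hs)
      have hI := hρb (A ∩ B) (Finset.mem_inter.mpr ⟨hA, hB⟩) hIu
      have hU := hub' (A ∪ B) (Finset.mem_union_left B hA)
      rw [hρb A hA hAu, hρb B hB hBu]
      linarith
    · have hU := hub' (A ∪ B) (Finset.mem_union_left B hA)
      have hI := hub (A ∩ B) (fun h => hB (Finset.mem_inter.mp h).2)
      rw [hρb A hA hAu, hρs B hBne hB]
      linarith
    · have hU := hub' (A ∪ B) (Finset.mem_union_right A hB)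
      have hI := hub (A ∩ B) (fun h => hA (Finset.mem_inter.mp h).1)
      rw [hρs A hAne hA, hρb B hB hBu]
      linarith
    · have hUnotlast : Fin.last m ∉ A ∪ B := fun h => by
        rcases Finset.mem_union.mp h with h | h
        · exact hA h
        · exact hB h
      have hU := hρs (A ∪ B) ⟨a, Finset.mem_union_left B haA⟩ hUnotlast
      have hI := hub (A ∩ B) (fun h => hA (Finset.mem_inter.mp h).1)
      rw [hρs A hAne hA, hρs B hBne hB]
      linarith
end

section
/- Let ℒ be a sublattice of 2^[n] (a collection of subsets of [n] containing ∅ and [n] and closed under intersections and unions) and let μ : ℒ → ℤ be a nonnegative integer-valued function with μ(∅) = 0 that is nondecreasing (A ⊆ B in ℒ implies μ(A) ≤ μ(B)) and submodular (μ(A) + μ(B) ≥ μ(A ∪ B) + μ(A ∩ B) for all A, B ∈ ℒ). Then P_(ℒ,μ) = { u ∈ ℤ_+^n : Σ_{i∈A} u(i) ≤ μ(A) for all A ∈ ℒ } is a discrete polymatroid. -/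
/-- Theorem 8.1: let `ℒ` be a sublattice of `2^[n]` (containing `∅` and
`[n]`, closed under intersections and unions) and `μ : ℒ → ℤ_+` a
nonnegative integer-valued, nondecreasing, submodular function with
`μ(∅) = 0`.  Then `P_(ℒ,μ) = {u ∈ ℤ_+^n : Σ_{i∈A} u(i) ≤ μ(A) for A ∈ ℒ}`
is a discrete polymatroid. -/
theorem sublattice_discretePolymatroid {n : ℕ}
    (L : Set (Finset (Fin n))) (μ : Finset (Fin n) → ℕ)
    (hempty : ∅ ∈ L) (huniv : Finset.univ ∈ L)
    (hinter : ∀ A ∈ L, ∀ B ∈ L, A ∩ B ∈ L)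
    (hunion : ∀ A ∈ L, ∀ B ∈ L, A ∪ B ∈ L)
    (hμempty : μ ∅ = 0)
    (hmono : ∀ A ∈ L, ∀ B ∈ L, A ⊆ B → μ A ≤ μ B)
    (hsub : ∀ A ∈ L, ∀ B ∈ L, μ (A ∪ B) + μ (A ∩ B) ≤ μ A + μ B) :
    IsDiscretePolymatroid {u : Fin n → ℕ | ∀ A ∈ L, ∑ i ∈ A, u i ≤ μ A} := by
  classical
  refine ⟨⟨0, ?_⟩, ?_, ?_, ?_⟩
  · intro A hA; simp
  · apply Set.Finite.subset
      (Set.Finite.pi (fun i : Fin n => Set.finite_Iic (μ Finset.univ)))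
    intro u hu
    simp only [Set.mem_pi, Set.mem_univ, Set.mem_Iic, forall_true_left]
    intro i
    calc u i ≤ ∑ j, u j :=
          Finset.single_le_sum (fun _ _ => Nat.zero_le _) (Finset.mem_univ i)
      _ ≤ μ Finset.univ := hu _ huniv
  · intro u hu v hv A hA
    exact le_trans (Finset.sum_le_sum (fun i _ => hv i)) (hu A hA)
  · intro u hu v hv hlt
    -- the sup of any finset of tight sets is tight and in L
    have tight_sup : ∀ S : Finset (Finset (Fin n)),
        (∀ A ∈ S, A ∈ L ∧ ∑ i ∈ A, u i = μ A) →
        S.sup id ∈ L ∧ ∑ i ∈ S.sup id, u i = μ (S.sup id) := by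
      intro S
      induction S using Finset.induction_on with
      | empty => intro _; simp [hempty, hμempty]
      | insert A S hnotmem ih =>
        intro h
        obtain ⟨hAL, hAt⟩ := h A (Finset.mem_insert_self _ _)
        obtain ⟨hBL, hBt⟩ := ih (fun B hB => h B (Finset.mem_insert_of_mem hB))
        set B := S.sup id with hBdef
        have hsup : (insert A S).sup id = A ∪ B := by
          rw [Finset.sup_insert]; rfl
        rw [hsup]
        refine ⟨hunion A hAL B hBL, ?_⟩
        have h1 : ∑ i ∈ A ∪ B, u i + ∑ i ∈ A ∩ B, u i
            = ∑ i ∈ A, u i + ∑ i ∈ B, u i := Finset.sum_union_inter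
        have h2 : ∑ i ∈ A ∪ B, u i ≤ μ (A ∪ B) := hu _ (hunion A hAL B hBL)
        have h3 : ∑ i ∈ A ∩ B, u i ≤ μ (A ∩ B) := hu _ (hinter A hAL B hBL)
        have h4 := hsub A hAL B hBL
        omega
    -- T : the union of all tight sets
    set F : Finset (Finset (Fin n)) :=
      Finset.univ.filter (fun A => A ∈ L ∧ ∑ i ∈ A, u i = μ A) with hF
    set T : Finset (Fin n) := F.sup id with hTdef
    obtain ⟨hTL, hTt⟩ := tight_sup F (by
      intro A hA
      exact (Finset.mem_filter.mp hA).2)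
    have hsubT : ∀ A ∈ L, ∑ i ∈ A, u i = μ A → A ⊆ T := by
      intro A hAL hAt
      exact Finset.le_sup (f := id)
        (Finset.mem_filter.mpr ⟨Finset.mem_univ A, hAL, hAt⟩)
    -- there is i ∉ T with u i < v i
    have hex : ∃ i, i ∉ T ∧ u i < v i := by
      by_contra hcon
      push_neg at hcon
      have hTv : ∑ i ∈ T, v i ≤ ∑ i ∈ T, u i := by
        rw [hTt]; exact hv T hTL
      have hCv : ∑ i ∈ Tᶜ, v i ≤ ∑ i ∈ Tᶜ, u i := by
        apply Finset.sum_le_sum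
        intro i hi
        exact hcon i (Finset.mem_compl.mp hi)
      have e1 : ∑ i ∈ T, u i + ∑ i ∈ Tᶜ, u i = ∑ i, u i :=
        Finset.sum_add_sum_compl T u
      have e2 : ∑ i ∈ T, v i + ∑ i ∈ Tᶜ, v i = ∑ i, v i :=
        Finset.sum_add_sum_compl T v
      omega
    obtain ⟨i, hiT, hiuv⟩ := hex
    refine ⟨fun j => if j = i then u j + 1 else u j, ?_, ?_, ?_⟩
    · intro A hA
      have hsum : ∑ j ∈ A, (if j = i then u j + 1 else u j)
          = ∑ j ∈ A, u j + ∑ j ∈ A, (if j = i then 1 else 0) := by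
        rw [← Finset.sum_add_distrib]
        apply Finset.sum_congr rfl
        intro j _
        split <;> simp
      rw [hsum]
      by_cases hiA : i ∈ A
      · have hsingle : ∑ j ∈ A, (if j = i then (1 : ℕ) else 0) = 1 := by
          rw [Finset.sum_eq_single i] <;> simp_all
        rw [hsingle]
        have hle : ∑ j ∈ A, u j ≤ μ A := hu A hA
        rcases lt_or_eq_of_le hle with h | h
        · omega
        · exact absurd (hsubT A hA h hiA) hiT
      · have hsingle : ∑ j ∈ A, (if j = i then (1 : ℕ) else 0) = 0 := by
          apply Finset.sum_eq_zero
          intro b hb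
          have : b ≠ i := fun h => hiA (h ▸ hb)
          simp [this]
        rw [hsingle, add_zero]
        exact hu A hA
    · refine lt_of_le_of_ne (fun j => by dsimp; split <;> omega) ?_
      intro h
      have := congrFun h i
      simp at this
    · intro j
      simp only [Pi.sup_apply]
      by_cases hj : j = i
      · subst hj
        show (if j = j then u j + 1 else u j) ≤ u j ⊔ v j
        rw [if_pos rfl]
        exact le_sup_of_le_right (by omega)
      · simp [hj, le_sup_left]
end

section
/- Let S ⊆ ℤ_+^n be a strongly stable set of vectors of common modulus d. Then for all u, v ∈ S with u ≠ v there exist indices i and j with u(i) > v(i) and u(j) < v(j) such that u − ε_i + ε_j ∈ S or v − ε_j + ε_i ∈ S. -/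
/-!
Compare `u` and `v` lexicographically, say `u < v`, and let `k` be the first coordinate where they
differ, so `u k < v k`. Since `u` and `v` have the same modulus, some later coordinate `j > k` has
`v j < u j`; in particular `u j > 0`, and strong stability moves a unit of `u` from `j` down to `k`.
-/

open Finset

def IsStronglyStable {ι : Type*} [LinearOrder ι] [DecidableEq ι] (S : Set (ι → ℕ)) : Prop :=
  ∀ u ∈ S, ∀ i : ι, 0 < u i → ∀ j : ι, j < i → u - Pi.single i 1 + Pi.single j 1 ∈ S

theorem exists_lt_gt_of_toLex_lt_of_sum_eq {ι M : Type*} [LinearOrder ι] [Fintype ι]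
    [AddCommMonoid M] [LinearOrder M] [IsOrderedCancelAddMonoid M] {u v : ι → M}
    (hlt : toLex u < toLex v) (hsum : ∑ i, u i = ∑ i, v i) :
    ∃ k j, k < j ∧ u k < v k ∧ v j < u j := by
  obtain ⟨k, hagree, hk⟩ := hlt
  obtain ⟨j, -, hj⟩ : ∃ j ∈ univ, v j < u j := by
    by_contra! hle
    exact (sum_lt_sum hle ⟨k, mem_univ k, hk⟩).ne hsum
  refine ⟨k, j, lt_of_not_ge fun hjk => ?_, hk, hj⟩
  rcases hjk.lt_or_eq with hjk | rfl
  · exact hj.ne (hagree j hjk).symm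
  · exact hj.asymm hk

theorem IsStronglyStable.exists_exchange_of_toLex_lt {ι : Type*} [LinearOrder ι] [Fintype ι]
    [DecidableEq ι] {S : Set (ι → ℕ)} (hS : IsStronglyStable S) {u v : ι → ℕ} (hu : u ∈ S)
    (hlt : toLex u < toLex v) (hsum : ∑ i, u i = ∑ i, v i) :
    ∃ i j, v i < u i ∧ u j < v j ∧ u - Pi.single i 1 + Pi.single j 1 ∈ S := by
  obtain ⟨k, j, hkj, hk, hj⟩ := exists_lt_gt_of_toLex_lt_of_sum_eq hlt hsum
  exact ⟨j, k, hj, hk, hS u hu j (Nat.zero_lt_of_lt hj) k hkj⟩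

/-- Example 2.6(e): a strongly stable set `S ⊆ ℤ_+^n` of vectors of common
modulus `d` (i.e. `u − ε_i + ε_j ∈ S` whenever `u ∈ S`, `u(i) > 0` and
`j < i`) satisfies the following weak form of the exchange property: for all
`u, v ∈ S` with `u ≠ v` there exist `i` and `j` with `u(i) > v(i)` and
`u(j) < v(j)` such that `u − ε_i + ε_j ∈ S` or `v − ε_j + ε_i ∈ S`. -/
theorem stronglyStable_weak_exchange {n d : ℕ} (S : Set (Fin n → ℕ))
    (hmod : ∀ u ∈ S, ∑ i, u i = d)
    (hstable : ∀ u ∈ S, ∀ i : Fin n, 0 < u i → ∀ j : Fin n, j < i →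
      u - Pi.single i 1 + Pi.single j 1 ∈ S) :
    ∀ u ∈ S, ∀ v ∈ S, u ≠ v →
      ∃ i j : Fin n, v i < u i ∧ u j < v j ∧
        (u - Pi.single i 1 + Pi.single j 1 ∈ S ∨
          v - Pi.single j 1 + Pi.single i 1 ∈ S) := by
  intro u hu v hv huv
  have hS : IsStronglyStable S := hstable
  have hsum : ∑ i, u i = ∑ i, v i := (hmod u hu).trans (hmod v hv).symm
  rcases lt_or_gt_of_ne (toLex.injective.ne huv) with hlt | hgt
  · obtain ⟨i, j, hi, hj, hmem⟩ := hS.exists_exchange_of_toLex_lt hu hlt hsum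
    exact ⟨i, j, hi, hj, Or.inl hmem⟩
  · obtain ⟨j, i, hj, hi, hmem⟩ := hS.exists_exchange_of_toLex_lt hv hgt hsum.symm
    exact ⟨i, j, hi, hj, Or.inr hmem⟩
end
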